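/- arXiv:1003.2016 — 7 statements merged into one kernel-verified Lean document; each statement's English description precedes it below -/
import Mathlib

section
/- Let N ≥ 1, let p_1,...,p_N be reals with 0 ≤ p_1 ≤ ... ≤ p_N, let L ≥ 0 and let k, l be real constants with k ≥ 1 and l ≥ 1. Define q_j = max(0, p_j − L), r_j = k·p_j + l·q_j, s_j(n,i) = p_j·n − q_j·i + c_j for arbitrary reals c_j, and the Type I function f^n_i = max over all (μ_1,...,μ_N) ∈ {0,1}^N of [Σ_{j=1}^N μ_j·s_j(n,i) − Σ_{1≤j<j'≤N} μ_j·μ_{j'}·r_j]. Then for all real n, i: f^n_i + f^{n+k−1}_{i−l−1} = max( f^{n+k−1}_{i−l} + f^n_{i−1}, f^{n+k}_{i−l} + f^{n−1}_{i−1} − L ). -/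
/-!
Putting the soliton with the largest `p` last, the type I function of `N` solitons is
`max (g n i) (s_N n i + g (n - k) (i + l))`, where `g` is the function of the first `N - 1`
solitons: the interaction terms `r_j` with the last soliton just shift the arguments of `g` by
`(-k, l)`. The bilinear equation is proved by induction on `N`, together with a family of
inequalities `h (x + w₁) + h (x + w₂) ≤ h x + h (x + w₁ + w₂) + C` whose defects `C` are multiples
of bounds `P ≥ p_j`, `Q ≥ q_j`. Expanding the two maxima on the left of such an inequality for the
`N`-soliton function gives four cases, each a nonnegative combination of inequalities of the
family for `g` at shifted points; monotonicity of `p` makes `p_N`, `q_N` admissible bounds for `g`.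
-/

open Finset

/-- Type I generalized ultradiscrete soliton expression:
`max` over all `(μ_1,...,μ_N) ∈ {0,1}^N` of
`Σ_j μ_j s_j − Σ_{j<j'} μ_j μ_{j'} r_j`. -/
noncomputable def typeIMax (N : ℕ) (s r : Fin N → ℝ) : ℝ :=
  Finset.univ.sup' Finset.univ_nonempty fun μ : Fin N → Bool =>
    (∑ j, (if μ j then (1 : ℝ) else 0) * s j) -
      ∑ j, ∑ j', if j < j' then
        (if μ j then (1 : ℝ) else 0) * (if μ j' then (1 : ℝ) else 0) * r j else 0

def typeIObj {N : ℕ} (s r : Fin N → ℝ) (μ : Fin N → Bool) : ℝ :=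
  (∑ j, (if μ j then (1 : ℝ) else 0) * s j) -
    ∑ j, ∑ j', if j < j' then
      (if μ j then (1 : ℝ) else 0) * (if μ j' then (1 : ℝ) else 0) * r j else 0

theorem typeIMax_eq_sup' (N : ℕ) (s r : Fin N → ℝ) :
    typeIMax N s r = univ.sup' univ_nonempty (typeIObj s r) := rfl

theorem typeIMax_zero (s r : Fin 0 → ℝ) : typeIMax 0 s r = 0 := by
  simp [typeIMax]

theorem typeIObj_snoc {M : ℕ} (s r : Fin (M + 1) → ℝ) (μ : Fin M → Bool) (b : Bool) :
    typeIObj s r (Fin.snoc μ b) =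
      if b then s (Fin.last M) +
          typeIObj (fun j => s j.castSucc - r j.castSucc) (fun j => r j.castSucc) μ
        else typeIObj (fun j => s j.castSucc) (fun j => r j.castSucc) μ := by
  simp only [typeIObj, Fin.sum_univ_castSucc, Fin.snoc_castSucc, Fin.snoc_last,
    Fin.castSucc_lt_castSucc_iff, Fin.castSucc_lt_last, if_true,
    not_lt.mpr (Fin.le_last _), if_false, Finset.sum_const_zero, add_zero]
  cases b
  · simp only [ite_mul, one_mul, zero_mul, Bool.false_eq_true, ↓reduceIte, add_zero, mul_ite,
      mul_one, mul_zero]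
  · simp only [ite_mul, one_mul, zero_mul, ↓reduceIte, mul_ite, mul_one, mul_zero,
      sum_add_distrib, mul_sub, sum_sub_distrib]
    ring

theorem typeIMax_succ (M : ℕ) (s r : Fin (M + 1) → ℝ) :
    typeIMax (M + 1) s r =
      max (typeIMax M (fun j => s j.castSucc) (fun j => r j.castSucc))
        (s (Fin.last M) +
          typeIMax M (fun j => s j.castSucc - r j.castSucc) (fun j => r j.castSucc)) := by
  simp only [typeIMax_eq_sup']
  refine le_antisymm (sup'_le _ _ fun μ _ => ?_) (max_le ?_ ?_)
  · rw [← Fin.snoc_init_self μ, typeIObj_snoc]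
    split
    · exact le_max_of_le_right (add_le_add_right (le_sup' _ (mem_univ _)) _)
    · exact le_max_of_le_left (le_sup' _ (mem_univ _))
  · refine sup'_le _ _ fun μ _ => ?_
    simpa only [typeIObj_snoc, Bool.false_eq_true, if_false] using
      le_sup' (typeIObj s r) (mem_univ (Fin.snoc μ false))
  · rw [← le_sub_iff_add_le']
    refine sup'_le _ _ fun μ _ => le_sub_iff_add_le'.mpr ?_
    simpa only [typeIObj_snoc, if_true] using le_sup' (typeIObj s r) (mem_univ (Fin.snoc μ true))

section Quadrangle

def QuadLE (h : ℝ → ℝ → ℝ) (w₁ w₂ : ℝ × ℝ) (C : ℝ) : Prop :=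
  ∀ u v, h (u + w₁.1) (v + w₁.2) + h (u + w₂.1) (v + w₂.2) ≤
    h u v + h (u + w₁.1 + w₂.1) (v + w₁.2 + w₂.2) + C

def QuadLEStepShift (k l Q : ℝ) (h : ℝ → ℝ → ℝ) : Prop :=
  QuadLE h (0, -1) (-k, l) Q

def QuadLEStepUnit (Q : ℝ) (h : ℝ → ℝ → ℝ) : Prop :=
  QuadLE h (0, -1) (-1, 0) Q

def QuadLEMultiShiftU (k l P : ℝ) (h : ℝ → ℝ → ℝ) : Prop :=
  ∀ (j : ℕ) (d : ℝ), 0 ≤ d → QuadLE h (-(j * k), j * l - 1) (d, 0) (j * P * d)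

def QuadLEMultiShiftV (k l Q : ℝ) (h : ℝ → ℝ → ℝ) : Prop :=
  ∀ (j : ℕ) (d : ℝ), 0 ≤ d → QuadLE h (-(j * k), j * l - 1) (0, -d) (j * Q * d)

def QuadLEBilinFst (k l P Q : ℝ) (h : ℝ → ℝ → ℝ) : Prop :=
  ∀ m j : ℕ, 1 ≤ m →
    QuadLE h (-(j * k), j * l - 1) (m * k - 1, -(m * l)) (j * (P * (m * k - 1) + Q * (m * l)))

def QuadLEBilinSnd (k l L P : ℝ) (h : ℝ → ℝ → ℝ) : Prop :=
  ∀ m : ℕ, QuadLE h (-1, -1) (m * k, -(m * l)) (m * min P L)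

def BilinLEMax (k l L Q : ℝ) (h : ℝ → ℝ → ℝ) : Prop :=
  ∀ (m : ℕ) (u v : ℝ), h u v + h (u + m * k - 1) (v - m * l - 1) ≤
    max (h u (v - 1) + h (u + m * k - 1) (v - m * l) + (m - 1) * Q)
      (h (u - 1) (v - 1) + h (u + m * k) (v - m * l) - m * L)

/-- The last three fields give the bilinear equation at `m = 1`; the other four are needed to
propagate them through `addSoliton`. -/
structure SolitonIneqs (k l L P Q : ℝ) (h : ℝ → ℝ → ℝ) : Prop where
  stepShift : QuadLEStepShift k l Q h
  stepUnit : QuadLEStepUnit Q h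
  multiShiftU : QuadLEMultiShiftU k l P h
  multiShiftV : QuadLEMultiShiftV k l Q h
  bilinFst : QuadLEBilinFst k l P Q h
  bilinSnd : QuadLEBilinSnd k l L P h
  bilinLEMax : BilinLEMax k l L Q h

variable {k l L P Q : ℝ}

theorem quadLE_zero {w₁ w₂ : ℝ × ℝ} {C : ℝ} (hC : 0 ≤ C) : QuadLE (fun _ _ => 0) w₁ w₂ C :=
  fun _ _ => by simpa using hC

theorem solitonIneqs_zero (hk : 1 ≤ k) (hl : 0 ≤ l) (hL : 0 ≤ L) (hP : 0 ≤ P) (hQ : 0 ≤ Q) :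
    SolitonIneqs k l L P Q (fun _ _ => 0) where
  stepShift := quadLE_zero hQ
  stepUnit := quadLE_zero hQ
  multiShiftU _ _ hd := quadLE_zero (by positivity)
  multiShiftV _ _ hd := quadLE_zero (by positivity)
  bilinFst m _ hm := by
    have hmk : 0 ≤ (m : ℝ) * k - 1 := by
      nlinarith [(by exact_mod_cast hm : (1 : ℝ) ≤ m)]
    exact quadLE_zero (by positivity)
  bilinSnd _ := quadLE_zero (mul_nonneg (Nat.cast_nonneg _) (le_min hP hL))
  bilinLEMax m _ _ := by
    rcases m with _ | m
    · simp
    · exact le_max_of_le_left (by push_cast; nlinarith [(Nat.cast_nonneg m : (0 : ℝ) ≤ m)])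

theorem SolitonIneqs.bilinear {h : ℝ → ℝ → ℝ} (H : SolitonIneqs k l L P Q h) (u v : ℝ) :
    h u v + h (u + k - 1) (v - l - 1) =
      max (h (u + k - 1) (v - l) + h u (v - 1)) (h (u + k) (v - l) + h (u - 1) (v - 1) - L) := by
  have hLE := H.bilinLEMax 1 u v
  have hFst := H.bilinFst 1 0 le_rfl u v
  have hSnd := H.bilinSnd 1 u v
  have hmin := min_le_right P L
  push_cast at hLE hFst hSnd
  refine le_antisymm ?_ (max_le ?_ ?_)
  -- `ring_nf` also normalizes the arguments of `h`, which `ring1` would treat as distinct atoms;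
  -- it leaves the goal `0 ≤ 0`.
  · rcases le_max_iff.mp hLE with hLE | hLE
    · exact le_max_of_le_left (by linear_combination (norm := (ring_nf; rfl)) hLE)
    · exact le_max_of_le_right (by linear_combination (norm := (ring_nf; rfl)) hLE)
  · linear_combination (norm := (ring_nf; rfl)) hFst
  · linear_combination (norm := (ring_nf; rfl)) hSnd + hmin

end Quadrangle

section AddSoliton

def addSoliton (k l p q c : ℝ) (g : ℝ → ℝ → ℝ) (u v : ℝ) : ℝ :=
  max (g u v) (p * u - q * v + c + g (u - k) (v + l))

theorem le_addSoliton (k l p q c : ℝ) (g : ℝ → ℝ → ℝ) :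
    (∀ u v, g u v ≤ addSoliton k l p q c g u v) ∧
      ∀ u v, p * u - q * v + c + g (u - k) (v + l) ≤ addSoliton k l p q c g u v :=
  ⟨fun _ _ => le_max_left _ _, fun _ _ => le_max_right _ _⟩

theorem max_add_max_le {a b c d e : ℝ} (h₁ : a + c ≤ e) (h₂ : a + d ≤ e)
    (h₃ : b + c ≤ e) (h₄ : b + d ≤ e) : max a b + max c d ≤ e := by
  rcases max_choice a b with h | h <;> rcases max_choice c d with h' | h' <;> rw [h, h'] <;>
    assumption

variable {k l L p q c P Q : ℝ} {g : ℝ → ℝ → ℝ}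

theorem QuadLEStepShift.addSoliton (h₁ : QuadLEStepShift k l q g) (h₂ : QuadLEStepShift k l Q g)
    (hqQ : q ≤ Q) : QuadLEStepShift k l Q (addSoliton k l p q c g) := by
  obtain ⟨hg, hs⟩ := le_addSoliton k l p q c g
  intro u v
  refine max_add_max_le ?_ ?_ ?_ ?_
  · linear_combination (norm := (ring_nf; rfl)) h₂ u v + hg u v + hg (u - k) (v + l - 1)
  · linear_combination (norm := (ring_nf; rfl))
      h₁ u v + h₂ (u - k) (v + l) + hg u v + hs (u - k) (v + l - 1)
  · linear_combination (norm := (ring_nf; rfl)) hs u v + hg (u - k) (v + l - 1) + hqQ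
  · linear_combination (norm := (ring_nf; rfl)) h₂ (u - k) (v + l) + hs u v + hs (u - k) (v + l - 1)

theorem QuadLEMultiShiftU.addSoliton (hv : QuadLEStepShift k l q g)
    (h₁ : QuadLEMultiShiftU k l p g) (h₂ : QuadLEMultiShiftU k l P g) (hpP : p ≤ P) :
    QuadLEMultiShiftU k l P (addSoliton k l p q c g) := by
  obtain ⟨hg, hs⟩ := le_addSoliton k l p q c g
  intro j d hd u v
  rcases j with _ | j <;> refine max_add_max_le ?_ ?_ ?_ ?_
  · linear_combination (norm := (push_cast; ring_nf; rfl))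
      h₂ 0 d hd u v + hg u v + hg (u + d) (v - 1)
  · linear_combination (norm := (push_cast; ring_nf; rfl))
      hv u v + h₂ 0 d hd (u - k) (v + l) + hg u v + hs (u + d) (v - 1)
  · linear_combination (norm := (push_cast; ring_nf; rfl))
      h₁ 1 d hd u v + hg u v + hs (u + d) (v - 1)
  · linear_combination (norm := (push_cast; ring_nf; rfl))
      h₂ 0 d hd (u - k) (v + l) + hs u v + hs (u + d) (v - 1)
  · linear_combination (norm := (push_cast; ring_nf; rfl))
      h₂ (j + 1) d hd u v + hg u v + hg (u + d - (j + 1) * k) (v + (j + 1) * l - 1)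
  · linear_combination (norm := (push_cast; ring_nf; rfl))
      h₁ j d hd (u - k) (v + l) + hs u v + hg (u + d - (j + 1) * k) (v + (j + 1) * l - 1) +
        (j + 1) * d * hpP
  · linear_combination (norm := (push_cast; ring_nf; rfl))
      h₁ (j + 2) d hd u v + hg u v + hs (u + d - (j + 1) * k) (v + (j + 1) * l - 1) +
        (j + 1) * d * hpP
  · linear_combination (norm := (push_cast; ring_nf; rfl))
      h₂ (j + 1) d hd (u - k) (v + l) + hs u v + hs (u + d - (j + 1) * k) (v + (j + 1) * l - 1)

theorem QuadLEMultiShiftV.addSoliton (hv : QuadLEStepShift k l q g)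
    (h₁ : QuadLEMultiShiftV k l q g) (h₂ : QuadLEMultiShiftV k l Q g) (hqQ : q ≤ Q) :
    QuadLEMultiShiftV k l Q (addSoliton k l p q c g) := by
  obtain ⟨hg, hs⟩ := le_addSoliton k l p q c g
  intro j d hd u v
  rcases j with _ | j <;> refine max_add_max_le ?_ ?_ ?_ ?_
  · linear_combination (norm := (push_cast; ring_nf; rfl)) h₂ 0 d hd u v + hg u v + hg u (v - d - 1)
  · linear_combination (norm := (push_cast; ring_nf; rfl))
      hv u v + h₂ 0 d hd (u - k) (v + l) + hg u v + hs u (v - d - 1)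
  · linear_combination (norm := (push_cast; ring_nf; rfl)) h₁ 1 d hd u v + hg u v + hs u (v - d - 1)
  · linear_combination (norm := (push_cast; ring_nf; rfl))
      h₂ 0 d hd (u - k) (v + l) + hs u v + hs u (v - d - 1)
  · linear_combination (norm := (push_cast; ring_nf; rfl))
      h₂ (j + 1) d hd u v + hg u v + hg (u - (j + 1) * k) (v - d + (j + 1) * l - 1)
  · linear_combination (norm := (push_cast; ring_nf; rfl))
      h₁ j d hd (u - k) (v + l) + hs u v + hg (u - (j + 1) * k) (v - d + (j + 1) * l - 1) +
        (j + 1) * d * hqQ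
  · linear_combination (norm := (push_cast; ring_nf; rfl))
      h₁ (j + 2) d hd u v + hg u v + hs (u - (j + 1) * k) (v - d + (j + 1) * l - 1) +
        (j + 1) * d * hqQ
  · linear_combination (norm := (push_cast; ring_nf; rfl))
      h₂ (j + 1) d hd (u - k) (v + l) + hs u v + hs (u - (j + 1) * k) (v - d + (j + 1) * l - 1)

theorem QuadLEStepUnit.addSoliton (hk : 1 ≤ k) (hl : 0 ≤ l) (hv : QuadLEStepShift k l q g)
    (hU : QuadLEMultiShiftU k l p g) (hV : QuadLEMultiShiftV k l q g)
    (h₂ : QuadLEStepUnit Q g) (hqQ : q ≤ Q) :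
    QuadLEStepUnit Q (addSoliton k l p q c g) := by
  obtain ⟨hg, hs⟩ := le_addSoliton k l p q c g
  intro u v
  refine max_add_max_le ?_ ?_ ?_ ?_
  · linear_combination (norm := (ring_nf; rfl)) h₂ u v + hg u v + hg (u - 1) (v - 1)
  · linear_combination (norm := (ring_nf; rfl))
      hv u v + h₂ (u - k) (v + l) + hg u v + hs (u - 1) (v - 1)
  · linear_combination (norm := (push_cast; ring_nf; rfl))
      hU 0 (k - 1) (by linarith) (u - k) (v + l) + hV 0 l hl (u - 1) (v + l) + hs u v +
        hg (u - 1) (v - 1) + hqQ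
  · linear_combination (norm := (ring_nf; rfl)) h₂ (u - k) (v + l) + hs u v + hs (u - 1) (v - 1)

theorem QuadLEBilinFst.addSoliton (hk : 1 ≤ k) (hl : 0 ≤ l) (hq : 0 ≤ q)
    (hc : QuadLEStepUnit q g) (h₁ : QuadLEBilinFst k l p q g) (h₂ : QuadLEBilinFst k l P Q g)
    (hpP : p ≤ P) (hqQ : q ≤ Q) :
    QuadLEBilinFst k l P Q (addSoliton k l p q c g) := by
  obtain ⟨hg, hs⟩ := le_addSoliton k l p q c g
  intro m j hm u v
  obtain ⟨m, rfl⟩ : ∃ m', m = m' + 1 := ⟨m - 1, by omega⟩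
  have hmk : 0 ≤ ((m : ℝ) + 1) * k - 1 := by nlinarith [(Nat.cast_nonneg m : (0 : ℝ) ≤ m)]
  have hpq : p * ((m + 1) * k - 1) + q * ((m + 1) * l) ≤
      P * ((m + 1) * k - 1) + Q * ((m + 1) * l) := by
    linear_combination ((m + 1) * k - 1) * hpP + ((m + 1) * l) * hqQ
  rcases j with _ | j <;> refine max_add_max_le ?_ ?_ ?_ ?_
  · linear_combination (norm := (push_cast; ring_nf; rfl))
      h₂ (m + 1) 0 (by omega) u v + hg u v + hg (u + (m + 1) * k - 1) (v - (m + 1) * l - 1)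
  · rcases m with _ | m
    · linear_combination (norm := (push_cast; ring_nf; rfl))
        hc u v + hg u v + hs (u + k - 1) (v - l - 1)
    · linear_combination (norm := (push_cast; ring_nf; rfl))
        h₂ (m + 1) 0 (by omega) u v + hg u v + hs (u + (m + 2) * k - 1) (v - (m + 2) * l - 1) + hq
  · linear_combination (norm := (push_cast; ring_nf; rfl))
      h₁ (m + 1) 1 (by omega) u v + hg u v + hs (u + (m + 1) * k - 1) (v - (m + 1) * l - 1)
  · linear_combination (norm := (push_cast; ring_nf; rfl))
      h₂ (m + 1) 0 (by omega) (u - k) (v + l) + hs u v +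
        hs (u + (m + 1) * k - 1) (v - (m + 1) * l - 1)
  · linear_combination (norm := (push_cast; ring_nf; rfl))
      h₂ (m + 1) (j + 1) (by omega) u v + hg u v +
        hg (u + (m - j) * k - 1) (v - (m - j) * l - 1)
  · linear_combination (norm := (push_cast; ring_nf; rfl))
      h₁ (m + 1) j (by omega) (u - k) (v + l) + hs u v +
        hg (u + (m - j) * k - 1) (v - (m - j) * l - 1) + (j + 1) * hpq
  · linear_combination (norm := (push_cast; ring_nf; rfl))
      h₁ (m + 1) (j + 2) (by omega) u v + hg u v +
        hs (u + (m - j) * k - 1) (v - (m - j) * l - 1) + (j + 1) * hpq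
  · linear_combination (norm := (push_cast; ring_nf; rfl))
      h₂ (m + 1) (j + 1) (by omega) (u - k) (v + l) + hs u v +
        hs (u + (m - j) * k - 1) (v - (m - j) * l - 1)

theorem QuadLEBilinSnd.addSoliton (hq : q = max 0 (p - L))
    (h₁ : QuadLEBilinSnd k l L p g) (h₂ : QuadLEBilinSnd k l L P g) (hpP : p ≤ P) :
    QuadLEBilinSnd k l L P (addSoliton k l p q c g) := by
  obtain ⟨hg, hs⟩ := le_addSoliton k l p q c g
  intro m u v
  rcases m with _ | m
  · linear_combination (norm := (push_cast; ring_nf; rfl))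
  have hpq : p - q = min p L := by rw [hq, ← min_sub_sub_left, sub_zero, sub_sub_cancel]
  have hmin : min p L ≤ min P L := min_le_min_right L hpP
  refine max_add_max_le ?_ ?_ ?_ ?_
  · linear_combination (norm := (push_cast; ring_nf; rfl))
      h₂ (m + 1) u v + hg u v + hg (u + (m + 1) * k - 1) (v - (m + 1) * l - 1)
  · linear_combination (norm := (push_cast; ring_nf; rfl))
      h₁ m u v + hg u v + hs (u + (m + 1) * k - 1) (v - (m + 1) * l - 1) + hpq + (m + 1) * hmin
  · linear_combination (norm := (push_cast; ring_nf; rfl))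
      h₁ (m + 2) (u - k) (v + l) + hs u v + hg (u + (m + 1) * k - 1) (v - (m + 1) * l - 1) -
        hpq + (m + 1) * hmin
  · linear_combination (norm := (push_cast; ring_nf; rfl))
      h₂ (m + 1) (u - k) (v + l) + hs u v + hs (u + (m + 1) * k - 1) (v - (m + 1) * l - 1)

theorem BilinLEMax.addSoliton (hq : q = max 0 (p - L))
    (hindep : q = 0 → ∀ u v v', g u v = g u v')
    (h₁ : BilinLEMax k l L q g) (h₂ : BilinLEMax k l L Q g) (hqQ : q ≤ Q) :
    BilinLEMax k l L Q (addSoliton k l p q c g) := by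
  obtain ⟨hg, hs⟩ := le_addSoliton k l p q c g
  intro m u v
  have hpq : p - q ≤ L := by rw [hq]; linarith [le_max_right 0 (p - L)]
  rcases m with _ | m
  · exact le_max_of_le_right (by linear_combination (norm := (push_cast; ring_nf; rfl)))
  refine max_add_max_le ?_ ?_ ?_ ?_
  · rcases le_max_iff.mp (h₂ (m + 1) u v) with hle | hle
    · refine le_max_of_le_left ?_
      linear_combination (norm := (push_cast; ring_nf; rfl))
        hle + hg u (v - 1) + hg (u + (m + 1) * k - 1) (v - (m + 1) * l)
    · refine le_max_of_le_right ?_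
      linear_combination (norm := (push_cast; ring_nf; rfl))
        hle + hg (u - 1) (v - 1) + hg (u + (m + 1) * k) (v - (m + 1) * l)
  · rcases le_or_gt L p with hLp | hpL
    · have hqp : q = p - L := by rw [hq, max_eq_right (by linarith)]
      rcases le_max_iff.mp (h₂ m u v) with hle | hle
      · refine le_max_of_le_left ?_
        linear_combination (norm := (push_cast; ring_nf; rfl))
          hle + hg u (v - 1) + hs (u + (m + 1) * k - 1) (v - (m + 1) * l) + hqQ
      · refine le_max_of_le_right ?_
        linear_combination (norm := (push_cast; ring_nf; rfl))
          hle + hg (u - 1) (v - 1) + hs (u + (m + 1) * k) (v - (m + 1) * l) + hqp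
    · have hq_zero : q = 0 := by rw [hq, max_eq_left (by linarith)]
      refine le_max_of_le_left ?_
      linear_combination (norm := (push_cast; ring_nf; rfl))
        hg u (v - 1) + hs (u + (m + 1) * k - 1) (v - (m + 1) * l) - hindep hq_zero u (v - 1) v -
          hindep hq_zero (u + m * k - 1) (v - m * l) (v - m * l - 1) + (m : ℝ) * hqQ +
          (1 - (m : ℝ)) * hq_zero
  · rcases le_max_iff.mp (h₁ (m + 2) (u - k) (v + l)) with hle | hle
    · refine le_max_of_le_left ?_
      linear_combination (norm := (push_cast; ring_nf; rfl))
        hle + hs u (v - 1) + hg (u + (m + 1) * k - 1) (v - (m + 1) * l) + (m : ℝ) * hqQ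
    · refine le_max_of_le_right ?_
      linear_combination (norm := (push_cast; ring_nf; rfl))
        hle + hs (u - 1) (v - 1) + hg (u + (m + 1) * k) (v - (m + 1) * l) + hpq
  · rcases le_max_iff.mp (h₂ (m + 1) (u - k) (v + l)) with hle | hle
    · refine le_max_of_le_left ?_
      linear_combination (norm := (push_cast; ring_nf; rfl))
        hle + hs u (v - 1) + hs (u + (m + 1) * k - 1) (v - (m + 1) * l)
    · refine le_max_of_le_right ?_
      linear_combination (norm := (push_cast; ring_nf; rfl))
        hle + hs (u - 1) (v - 1) + hs (u + (m + 1) * k) (v - (m + 1) * l)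

theorem SolitonIneqs.addSoliton (hk : 1 ≤ k) (hl : 0 ≤ l) (hq : q = max 0 (p - L))
    (hindep : q = 0 → ∀ u v v', g u v = g u v')
    (H : SolitonIneqs k l L p q g) (H' : SolitonIneqs k l L P Q g) (hpP : p ≤ P) (hqQ : q ≤ Q) :
    SolitonIneqs k l L P Q (addSoliton k l p q c g) where
  stepShift := H.stepShift.addSoliton H'.stepShift hqQ
  stepUnit := H'.stepUnit.addSoliton hk hl H.stepShift H.multiShiftU H.multiShiftV hqQ
  multiShiftU := H.multiShiftU.addSoliton H.stepShift H'.multiShiftU hpP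
  multiShiftV := H.multiShiftV.addSoliton H.stepShift H'.multiShiftV hqQ
  bilinFst := H.bilinFst.addSoliton hk hl (hq ▸ le_max_left _ _) H.stepUnit H'.bilinFst hpP hqQ
  bilinSnd := H.bilinSnd.addSoliton hq H'.bilinSnd hpP
  bilinLEMax := H.bilinLEMax.addSoliton hq hindep H'.bilinLEMax hqQ

end AddSoliton

section TypeISoliton

variable {k l L : ℝ}

noncomputable def typeISoliton (k l : ℝ) {M : ℕ} (p q c : Fin M → ℝ) (n i : ℝ) : ℝ :=
  typeIMax M (fun j => p j * n - q j * i + c j) (fun j => k * p j + l * q j)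

theorem typeISoliton_zero (p q c : Fin 0 → ℝ) : typeISoliton k l p q c = fun _ _ => 0 := by
  funext n i
  exact typeIMax_zero _ _

theorem typeISoliton_succ {M : ℕ} (p q c : Fin (M + 1) → ℝ) :
    typeISoliton k l p q c =
      addSoliton k l (p (Fin.last M)) (q (Fin.last M)) (c (Fin.last M))
        (typeISoliton k l (fun j => p j.castSucc) (fun j => q j.castSucc)
          (fun j => c j.castSucc)) := by
  funext n i
  simp only [typeISoliton, addSoliton, typeIMax_succ]
  congr 3
  funext j
  ring

theorem typeISoliton_eq_of_q_eq_zero {M : ℕ} (p q c : Fin M → ℝ) (hq : ∀ j, q j = 0)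
    (n i i' : ℝ) : typeISoliton k l p q c n i = typeISoliton k l p q c n i' := by
  simp [typeISoliton, hq]

theorem solitonIneqs_typeISoliton (hk : 1 ≤ k) (hl : 0 ≤ l) (hL : 0 ≤ L) {M : ℕ}
    (p q c : Fin M → ℝ) (hp : ∀ j, 0 ≤ p j) (hmono : Monotone p)
    (hq : ∀ j, q j = max 0 (p j - L)) (P Q : ℝ) (hP : 0 ≤ P) (hQ : 0 ≤ Q)
    (hpP : ∀ j, p j ≤ P) (hqQ : ∀ j, q j ≤ Q) :
    SolitonIneqs k l L P Q (typeISoliton k l p q c) := by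
  induction M generalizing P Q with
  | zero => exact typeISoliton_zero p q c ▸ solitonIneqs_zero hk hl hL hP hQ
  | succ M ih =>
    have hq_le : ∀ j, q j ≤ q (Fin.last M) := fun j => by
      rw [hq, hq]; exact max_le_max le_rfl (by linarith [hmono (Fin.le_last j)])
    have hq_nonneg : 0 ≤ q (Fin.last M) := hq _ ▸ le_max_left _ _
    have ih' := ih (fun j => p j.castSucc) (fun j => q j.castSucc) (fun j => c j.castSucc)
      (fun j => hp _) (hmono.comp Fin.strictMono_castSucc.monotone) (fun j => hq _)
    rw [typeISoliton_succ]
    refine SolitonIneqs.addSoliton hk hl (hq _) ?_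
      (ih' _ _ (hp _) hq_nonneg (fun j => hmono (Fin.le_last _)) (fun j => hq_le _))
      (ih' P Q hP hQ (fun j => hpP _) (fun j => hqQ _)) (hpP _) (hqQ _)
    intro hq_zero
    exact typeISoliton_eq_of_q_eq_zero _ _ _ fun j =>
      le_antisymm (hq_zero ▸ hq_le _) (hq _ ▸ le_max_left _ _)

end TypeISoliton

theorem utoda_type_bilinear_typeI_general (N : ℕ) (p c : Fin N → ℝ)
    (L k l : ℝ) (hp0 : ∀ j, 0 ≤ p j) (hpmono : Monotone p)
    (hL : 0 ≤ L) (hk : 1 ≤ k) (hl : 1 ≤ l)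
    (q r : Fin N → ℝ)
    (hq : ∀ j, q j = max 0 (p j - L))
    (hr : ∀ j, r j = k * p j + l * q j)
    (f : ℝ → ℝ → ℝ)
    (hf : ∀ n i : ℝ, f n i = typeIMax N (fun j => p j * n - q j * i + c j) r) :
    ∀ n i : ℝ,
      f n i + f (n + k - 1) (i - l - 1) =
        max (f (n + k - 1) (i - l) + f n (i - 1))
            (f (n + k) (i - l) + f (n - 1) (i - 1) - L) := by
  have hq0 : ∀ j, 0 ≤ q j := fun j => hq j ▸ le_max_left _ _
  obtain rfl : f = typeISoliton k l p q c := by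
    funext n i
    rw [hf, typeISoliton, funext hr]
  exact (solitonIneqs_typeISoliton hk (by linarith) hL p q c hp0 hpmono hq (∑ j, p j) (∑ j, q j)
    (sum_nonneg fun j _ => hp0 j) (sum_nonneg fun j _ => hq0 j)
    (fun j => single_le_sum (fun j _ => hp0 j) (mem_univ j))
    (fun j => single_le_sum (fun j _ => hq0 j) (mem_univ j))).bilinear

theorem utoda_type_bilinear_typeI (N : ℕ) (hN : 1 ≤ N) (p c : Fin N → ℝ)
    (L k l : ℝ) (hp0 : ∀ j, 0 ≤ p j) (hpmono : Monotone p)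
    (hL : 0 ≤ L) (hk : 1 ≤ k) (hl : 1 ≤ l)
    (q r : Fin N → ℝ)
    (hq : ∀ j, q j = max 0 (p j - L))
    (hr : ∀ j, r j = k * p j + l * q j)
    (f : ℝ → ℝ → ℝ)
    (hf : ∀ n i : ℝ, f n i = typeIMax N (fun j => p j * n - q j * i + c j) r) :
    ∀ n i : ℝ,
      f n i + f (n + k - 1) (i - l - 1) =
        max (f (n + k - 1) (i - l) + f n (i - 1))
            (f (n + k) (i - l) + f (n - 1) (i - 1) - L) :=
  utoda_type_bilinear_typeI_general N p c L k l hp0 hpmono hL hk hl q r hq hr f hf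
end

section
/- Let N ≥ 1 and let p_1,...,p_{N+1}, q_1,...,q_{N+1}, c_1,...,c_{N+1} be reals satisfying 0 ≤ p_1 ≤ ... ≤ p_{N+1}, 0 ≤ q_1 ≤ ... ≤ q_{N+1}, and 0 ≤ p_1 − q_1 ≤ p_2 − q_2 ≤ ... ≤ p_{N+1} − q_{N+1}. Let k, l ≥ 0 and set s_j(n,i) = p_j·n − q_j·i + c_j and r_j = k·p_j + l·q_j. Define f^n_i = max over (μ_1,...,μ_N) ∈ {0,1}^N of [Σ_{j=1}^N μ_j·s_j(n,i) − Σ_{1≤j<j'≤N} μ_j·μ_{j'}·r_j] (the N-soliton Type I function) and g^n_i = max over (μ_1,...,μ_{N+1}) ∈ {0,1}^{N+1} of [Σ_{j=1}^{N+1} μ_j·s_j(n,i) − Σ_{1≤j<j'≤N+1} μ_j·μ_{j'}·r_j] (the (N+1)-soliton Type I function). Let α, β be reals with 0 ≤ α ≤ k and −k−l+α ≤ β ≤ α, and set A = (k−α)·p_{N+1} + (l+β)·q_{N+1}. Then for all real n, i: f^n_i + g^{n+α}_{i+β} = max( f^{n+α}_{i+β} + g^n_i, f^{n−k+α}_{i+l+β}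 + g^{n+k}_{i−l} − A ). -/
open Finset

namespace BT

def ind (b : Bool) : ℝ := if b then 1 else 0

@[simp] lemma ind_true : ind true = 1 := rfl
@[simp] lemma ind_false : ind false = 0 := rfl
lemma ind_nonneg (b : Bool) : 0 ≤ ind b := by cases b <;> simp [ind]

variable {M : ℕ}

noncomputable def Ls (t : Fin M → Bool) (w : Fin M → ℝ) : ℝ := ∑ j, ind (t j) * w j

noncomputable def Qs (t : Fin M → Bool) (r : Fin M → ℝ) : ℝ :=
  ∑ j, ∑ j', if j < j' then ind (t j) * ind (t j') * r j else 0

noncomputable def Ew (t : Fin M → Bool) (w r : Fin M → ℝ) : ℝ := Ls t w - Qs t r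

lemma Ls_add (t : Fin M → Bool) (w u : Fin M → ℝ) :
    Ls t (fun j => w j + u j) = Ls t w + Ls t u := by
  simp [Ls, mul_add, Finset.sum_add_distrib]

lemma Ls_sub (t : Fin M → Bool) (w u : Fin M → ℝ) :
    Ls t (fun j => w j - u j) = Ls t w - Ls t u := by
  simp [Ls, mul_sub, Finset.sum_sub_distrib]

lemma Ls_update (t : Fin M → Bool) (x : Fin M) (v : Bool) (w : Fin M → ℝ) :
    Ls (Function.update t x v) w = Ls t w + (ind v - ind (t x)) * w x := by
  unfold Ls
  have h : ∀ j, ind (Function.update t x v j) * w j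
      = ind (t j) * w j + (if j = x then (ind v - ind (t x)) * w x else 0) := by
    intro j
    rcases eq_or_ne j x with rfl | h
    · simp; ring
    · simp [Function.update_of_ne h, h]
  simp only [h, Finset.sum_add_distrib, Finset.sum_ite_eq' Finset.univ x
      (fun _ => (ind v - ind (t x)) * w x), Finset.mem_univ, if_true]

noncomputable def cw (x : Fin M) (r : Fin M → ℝ) : Fin M → ℝ :=
  fun j => if j < x then r j else if x < j then r x else 0

lemma cw_eq (x : Fin M) (r : Fin M → ℝ) (j : Fin M) :
    cw x r j = (if j < x then r j else 0) + (if x < j then r x else 0) := by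
  unfold cw
  rcases lt_trichotomy j x with h | rfl | h
  · simp [h, asymm h]
  · simp
  · simp [h, asymm h]
lemma Qs_update (t : Fin M → Bool) (x : Fin M) (v : Bool) (r : Fin M → ℝ) :
    Qs (Function.update t x v) r = Qs t r + (ind v - ind (t x)) * Ls t (cw x r) := by
  set Δ : ℝ := ind v - ind (t x) with hΔ
  have hind : ∀ j, ind (Function.update t x v j) = ind (t j) + (if j = x then Δ else 0) := by
    intro j
    rcases eq_or_ne j x with rfl | h
    · simp [hΔ]
    · simp [Function.update_of_ne h, h]
  unfold Qs
  have hterm : ∀ j j', (if j < j' then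
      ind (Function.update t x v j) * ind (Function.update t x v j') * r j else 0)
      = (if j < j' then ind (t j) * ind (t j') * r j else 0)
        + (if j' = x then (if j < x then ind (t j) * Δ * r j else 0) else 0)
        + (if j = x then (if x < j' then Δ * ind (t j') * r x else 0) else 0) := by
    intro j j'
    rw [hind j, hind j']
    rcases eq_or_ne j x with rfl | hjx
    · rcases eq_or_ne j' j with rfl | hj'j
      · simp
      · simp only [if_pos rfl, if_neg hj'j, add_zero]
        try split_ifs with h <;> try ring
    · rcases eq_or_ne j' x with rfl | hj'x
      · simp only [if_neg hjx, if_pos rfl, add_zero]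
        try split_ifs with h <;> try ring
      · simp only [if_neg hjx, if_neg hj'x, add_zero]
        try split_ifs <;> try ring
  simp only [hterm, Finset.sum_add_distrib]
  have h2 : ∀ j : Fin M, (∑ j' : Fin M, (if j' = x then (if j < x then ind (t j) * Δ * r j else 0) else 0))
      = (if j < x then ind (t j) * Δ * r j else 0) := by
    intro j
    rw [Finset.sum_ite_eq' Finset.univ x (fun _ => (if j < x then ind (t j) * Δ * r j else 0))]
    simp
  have h3 : (∑ j : Fin M, (if j = x then (∑ j' : Fin M, (if x < j' then Δ * ind (t j') * r x else 0)) else 0))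
      = ∑ j' : Fin M, (if x < j' then Δ * ind (t j') * r x else 0) := by
    rw [Finset.sum_ite_eq' Finset.univ x
      (fun _ => (∑ j' : Fin M, (if x < j' then Δ * ind (t j') * r x else 0)))]
    simp
  have h3' : ∀ j : Fin M, (∑ j' : Fin M, (if j = x then (if x < j' then Δ * ind (t j') * r x else 0) else 0))
      = (if j = x then (∑ j' : Fin M, (if x < j' then Δ * ind (t j') * r x else 0)) else 0) := by
    intro j
    split_ifs with h
    · simp [h]
    · simp [h]
  simp only [h2, h3', h3]
  have hL : Ls t (cw x r) = (∑ j, ind (t j) * (if j < x then r j else 0))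
      + (∑ j, ind (t j) * (if x < j then r x else 0)) := by
    unfold Ls
    rw [← Finset.sum_add_distrib]
    apply Finset.sum_congr rfl
    intro j _
    rw [cw_eq]
    ring
  rw [hL]
  have e1 : (∑ j : Fin M, (if j < x then ind (t j) * Δ * r j else 0))
      = Δ * ∑ j, ind (t j) * (if j < x then r j else 0) := by
    rw [Finset.mul_sum]
    apply Finset.sum_congr rfl
    intro j _
    split_ifs <;> try ring
  have e2 : (∑ j' : Fin M, (if x < j' then Δ * ind (t j') * r x else 0))
      = Δ * ∑ j, ind (t j) * (if x < j then r x else 0) := by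
    rw [Finset.mul_sum]
    apply Finset.sum_congr rfl
    intro j _
    split_ifs <;> try ring
  rw [e1, e2]
  ring

def ext (μ : Fin M → Bool) : Fin (M + 1) → Bool := Fin.snoc μ false

@[simp] lemma ext_last (μ : Fin M → Bool) : ext μ (Fin.last M) = false := by
  simp [ext]

@[simp] lemma ext_castSucc (μ : Fin M → Bool) (j : Fin M) : ext μ j.castSucc = μ j := by
  simp [ext]

lemma eq_ext_of_last_false {t : Fin (M + 1) → Bool} (h : t (Fin.last M) = false) :
    t = ext (fun j => t j.castSucc) := by
  funext j
  rcases Fin.eq_castSucc_or_eq_last j with ⟨j', rfl⟩ | rfl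
  · simp
  · simp [h]

lemma update_last_false_eq_ext (t : Fin (M + 1) → Bool) :
    Function.update t (Fin.last M) false = ext (fun j => t j.castSucc) := by
  funext j
  rcases Fin.eq_castSucc_or_eq_last j with ⟨j', rfl⟩ | rfl
  · rw [Function.update_of_ne (Fin.castSucc_lt_last j').ne]
    simp
  · simp

lemma Ls_ext (μ : Fin M → Bool) (w : Fin (M + 1) → ℝ) :
    Ls (ext μ) w = Ls μ (fun j => w j.castSucc) := by
  unfold Ls
  rw [Fin.sum_univ_castSucc]
  simp

lemma Qs_ext (μ : Fin M → Bool) (r : Fin (M + 1) → ℝ) :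
    Qs (ext μ) r = Qs μ (fun j => r j.castSucc) := by
  unfold Qs
  rw [Fin.sum_univ_castSucc]
  have hlast : (∑ j' : Fin (M + 1), if Fin.last M < j' then
      ind (ext μ (Fin.last M)) * ind (ext μ j') * r (Fin.last M) else 0) = 0 := by
    apply Finset.sum_eq_zero
    intro j' _
    rw [if_neg (not_lt.2 (Fin.le_last j'))]
  rw [hlast, add_zero]
  apply Finset.sum_congr rfl
  intro j _
  rw [Fin.sum_univ_castSucc]
  simp [Fin.castSucc_lt_castSucc_iff]

lemma Ew_ext (μ : Fin M → Bool) (w r : Fin (M + 1) → ℝ) :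
    Ew (ext μ) w r = Ew μ (fun j => w j.castSucc) (fun j => r j.castSucc) := by
  unfold Ew
  rw [Ls_ext, Qs_ext]

lemma Ls_cw_last (t : Fin (M + 1) → Bool) (r : Fin (M + 1) → ℝ) :
    Ls t (cw (Fin.last M) r) = Ls t r - ind (t (Fin.last M)) * r (Fin.last M) := by
  unfold Ls
  rw [Fin.sum_univ_castSucc, Fin.sum_univ_castSucc (f := fun j => ind (t j) * r j)]
  have h1 : ∀ j : Fin M, cw (Fin.last M) r j.castSucc = r j.castSucc := by
    intro j
    unfold cw
    rw [if_pos (Fin.castSucc_lt_last j)]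
  have h2 : cw (Fin.last M) r (Fin.last M) = 0 := by
    unfold cw
    simp
  simp only [h1, h2]
  ring

lemma sigma_eq (r d e : Fin (M + 1) → ℝ) (A : ℝ)
    (hAeq : A = r (Fin.last M) - d (Fin.last M))
    (a b : Fin (M + 1) → Bool) (ha : a (Fin.last M) = false) (hb : b (Fin.last M) = true) :
    Ew a e r + Ew b (fun j => e j + d j) r + A
      = Ew (Function.update b (Fin.last M) false) (fun j => e j + d j - r j) r
        + Ew (Function.update a (Fin.last M) true) (fun j => e j + r j) r := by
  unfold Ew
  rw [Ls_update, Ls_update, Qs_update, Qs_update, Ls_cw_last, Ls_cw_last, ha, hb]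
  simp only [Ls_sub, Ls_add]
  simp only [ind_true, ind_false]
  rw [hAeq]
  ring

lemma ge1a (r d e : Fin (M + 1) → ℝ) (hr0 : ∀ j, 0 ≤ r j) (hdL : 0 ≤ d (Fin.last M))
    (a b : Fin (M + 1) → Bool) (ha : a (Fin.last M) = false) (hb : b (Fin.last M) = true)
    (hsub : ∀ j, a j = true → b j = true) :
    Ew a (fun j => e j + d j) r + Ew b e r
      ≤ Ew (Function.update b (Fin.last M) false) e r
        + Ew (Function.update a (Fin.last M) true) (fun j => e j + d j) r := by
  have key : Ls a r + r (Fin.last M) ≤ Ls b r := by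
    have hpt : ∀ j : Fin (M + 1),
        ind (a j) * r j + (if j = Fin.last M then r (Fin.last M) else 0) ≤ ind (b j) * r j := by
      intro j
      rcases eq_or_ne j (Fin.last M) with rfl | hj
      · rw [ha, hb]
        simp
      · rw [if_neg hj, add_zero]
        cases hja : a j
        · simp only [ind_false, zero_mul]
          exact mul_nonneg (ind_nonneg _) (hr0 j)
        · rw [hsub j hja]
      
    have := Finset.sum_le_sum (fun j (_ : j ∈ Finset.univ) => hpt j)
    rw [Finset.sum_add_distrib, Finset.sum_ite_eq' Finset.univ (Fin.last M)
      (fun _ => r (Fin.last M))] at this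
    simpa [Ls] using this
  unfold Ew
  rw [Ls_update, Ls_update, Qs_update, Qs_update, Ls_cw_last, Ls_cw_last, ha, hb]
  simp only [Ls_sub, Ls_add, ind_true, ind_false]
  linarith

lemma ge2a (r d e : Fin (M + 1) → ℝ) (A : ℝ) (hr0 : ∀ j, 0 ≤ r j) (hA0 : 0 ≤ A)
    (a b : Fin (M + 1) → Bool)
    (hsub : ∀ j, b j = true → a j = true) :
    Ew a (fun j => e j + d j - r j) r + Ew b (fun j => e j + r j) r - A
      ≤ Ew b e r + Ew a (fun j => e j + d j) r := by
  have key : Ls b r ≤ Ls a r := by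
    apply Finset.sum_le_sum
    intro j _
    cases hjb : b j
    · simp only [ind_false, zero_mul]
      exact mul_nonneg (ind_nonneg _) (hr0 j)
    · rw [hsub j hjb]
  unfold Ew
  simp only [Ls_sub, Ls_add]
  linarith

lemma sum_ind_sub (t : Fin (M + 1) → Bool) (r h : Fin (M + 1) → ℝ) :
    (∑ j, ind (t j) * (r j - h j)) = Ls t r - Ls t h := by
  unfold Ls
  rw [← Finset.sum_sub_distrib]
  exact Finset.sum_congr rfl fun j _ => by ring

lemma ge2b (r d e : Fin (M + 1) → ℝ) (A : ℝ)
    (hr0 : ∀ j, 0 ≤ r j) (hrm : Monotone r) (hAz : ∀ j, r j - d j ≤ A)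
    (a b : Fin (M + 1) → Bool) (z : Fin (M + 1)) (hbz : b z = true) (haz : a z = false)
    (hmax : ∀ j, z < j → b j = true → a j = true) :
    Ew a (fun j => e j + d j - r j) r + Ew b (fun j => e j + r j) r - A
      ≤ Ew (Function.update b z false) e r
        + Ew (Function.update a z true) (fun j => e j + d j) r := by
  have hh : ∀ j, 0 ≤ r j - cw z r j := by
    intro j
    unfold cw
    split_ifs with h1 h2
    · simp
    · exact sub_nonneg.2 (hrm h2.le)
    · simpa using hr0 j
  have hcz : cw z r z = 0 := by
    unfold cw
    simp
  have key : Ls b r - Ls b (cw z r) ≤ r z + (Ls a r - Ls a (cw z r)) := by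
    rw [← sum_ind_sub, ← sum_ind_sub]
    have hpt : ∀ j : Fin (M + 1), ind (b j) * (r j - cw z r j)
        ≤ (if j = z then r z else 0) + ind (a j) * (r j - cw z r j) := by
      intro j
      rcases eq_or_ne j z with rfl | hj
      · rw [hbz, haz, if_pos rfl, hcz]
        simp
      · rw [if_neg hj, zero_add]
        cases hjb : b j
        · simp only [ind_false, zero_mul]
          exact mul_nonneg (ind_nonneg _) (hh j)
        · rcases lt_or_ge z j with hzj | hjz
          · rw [hmax j hzj hjb]
          · have hcj : cw z r j = r j := by
              unfold cw
              rw [if_pos (lt_of_le_of_ne hjz hj)]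
            simp [hcj]
    have := Finset.sum_le_sum (fun j (_ : j ∈ Finset.univ) => hpt j)
    rw [Finset.sum_add_distrib, Finset.sum_ite_eq' Finset.univ z (fun _ => r z)] at this
    simpa using this
  unfold Ew
  rw [Ls_update, Ls_update, Qs_update, Qs_update, haz, hbz]
  simp only [Ls_sub, Ls_add, ind_true, ind_false]
  have := hAz z
  linarith

lemma ge1b (r d e : Fin (M + 1) → ℝ)
    (hr0 : ∀ j, 0 ≤ r j) (hrm : Monotone r) (hdm : Monotone d)
    (a b : Fin (M + 1) → Bool) (ha : a (Fin.last M) = false) (hb : b (Fin.last M) = true)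
    (x : Fin (M + 1)) (hax : a x = true) (hbx : b x = false)
    (hmax : ∀ j, x < j → a j = true → b j = true) :
    Ew a (fun j => e j + d j) r + Ew b e r
      ≤ Ew (Function.update (Function.update b (Fin.last M) false) x true) e r
        + Ew (Function.update (Function.update a (Fin.last M) true) x false)
            (fun j => e j + d j) r := by
  have hxl : x ≠ Fin.last M := by
    intro h
    rw [h, hb] at hbx
    simp at hbx
  have hxlt : x < Fin.last M := lt_of_le_of_ne (Fin.le_last x) hxl
  have hcwl : cw x r (Fin.last M) = r x := by
    unfold cw
    rw [if_neg (not_lt.2 (Fin.le_last x)), if_pos hxlt]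
  have hcx : cw x r x = 0 := by
    unfold cw
    simp
  have hb1 : Function.update b (Fin.last M) false x = b x :=
    Function.update_of_ne hxl _ _
  have ha1 : Function.update a (Fin.last M) true x = a x :=
    Function.update_of_ne hxl _ _
  have hh : ∀ j, 0 ≤ r j - cw x r j := by
    intro j
    unfold cw
    split_ifs with h1 h2
    · simp
    · exact sub_nonneg.2 (hrm h2.le)
    · simpa using hr0 j
  have key : Ls a r - Ls a (cw x r) + (r (Fin.last M) - r x)
      ≤ r x + (Ls b r - Ls b (cw x r)) := by
    rw [← sum_ind_sub, ← sum_ind_sub]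
    have hpt : ∀ j : Fin (M + 1),
        ind (a j) * (r j - cw x r j) + (if j = Fin.last M then r (Fin.last M) - r x else 0)
        ≤ (if j = x then r x else 0) + ind (b j) * (r j - cw x r j) := by
      intro j
      rcases eq_or_ne j (Fin.last M) with rfl | hjl
      · rw [ha, hb, if_pos rfl, if_neg (Ne.symm hxl), hcwl]
        simp
      · rw [if_neg hjl, add_zero]
        rcases eq_or_ne j x with rfl | hjx
        · rw [hax, hbx, if_pos rfl, hcx]
          simp
        · rw [if_neg hjx, zero_add]
          cases hja : a j
          · simp only [ind_false, zero_mul]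
            exact mul_nonneg (ind_nonneg _) (hh j)
          · rcases lt_or_ge x j with hxj | hjx'
            · rw [hmax j hxj hja]
            · have hcj : cw x r j = r j := by
                unfold cw
                rw [if_pos (lt_of_le_of_ne hjx' hjx)]
              simp [hcj]
    have := Finset.sum_le_sum (fun j (_ : j ∈ Finset.univ) => hpt j)
    rw [Finset.sum_add_distrib, Finset.sum_add_distrib,
      Finset.sum_ite_eq' Finset.univ (Fin.last M) (fun _ => r (Fin.last M) - r x),
      Finset.sum_ite_eq' Finset.univ x (fun _ => r x)] at this
    simpa using this
  have hdx : d x ≤ d (Fin.last M) := hdm (Fin.le_last x)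
  unfold Ew
  rw [Ls_update, Ls_update, Ls_update, Ls_update, Qs_update, Qs_update, Qs_update, Qs_update,
    Ls_update, Ls_update, Ls_cw_last, Ls_cw_last, ha, hb, hb1, ha1, hax, hbx, hcwl]
  simp only [Ls_sub, Ls_add, ind_true, ind_false]
  linarith

lemma main_core (r d e : Fin (M + 1) → ℝ) (A : ℝ)
    (hr0 : ∀ j, 0 ≤ r j) (hrm : Monotone r) (hdm : Monotone d)
    (hdL : 0 ≤ d (Fin.last M)) (hA0 : 0 ≤ A) (hAz : ∀ j, r j - d j ≤ A)
    (hAeq : A = r (Fin.last M) - d (Fin.last M)) :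
    (Finset.univ.sup' Finset.univ_nonempty fun μ : Fin M → Bool => Ew (ext μ) e r)
      + (Finset.univ.sup' Finset.univ_nonempty fun ν : Fin (M + 1) → Bool =>
          Ew ν (fun j => e j + d j) r)
    = max ((Finset.univ.sup' Finset.univ_nonempty fun μ : Fin M → Bool =>
              Ew (ext μ) (fun j => e j + d j) r)
            + (Finset.univ.sup' Finset.univ_nonempty fun ν : Fin (M + 1) → Bool => Ew ν e r))
          ((Finset.univ.sup' Finset.univ_nonempty fun μ : Fin M → Bool =>
              Ew (ext μ) (fun j => e j + d j - r j) r)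
            + (Finset.univ.sup' Finset.univ_nonempty fun ν : Fin (M + 1) → Bool =>
                Ew ν (fun j => e j + r j) r) - A) := by
  apply le_antisymm
  · -- LHS ≤ RHS
    obtain ⟨μ0, -, hμ0⟩ := Finset.exists_mem_eq_sup' Finset.univ_nonempty
      (fun μ : Fin M → Bool => Ew (ext μ) e r)
    obtain ⟨ν0, -, hν0⟩ := Finset.exists_mem_eq_sup' Finset.univ_nonempty
      (fun ν : Fin (M + 1) → Bool => Ew ν (fun j => e j + d j) r)
    rw [hμ0, hν0]
    cases hn : ν0 (Fin.last M) with
    | false =>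
      have hrepr := eq_ext_of_last_false hn
      have h1 := Finset.le_sup' (fun μ : Fin M → Bool => Ew (ext μ) (fun j => e j + d j) r)
        (Finset.mem_univ (fun j => ν0 j.castSucc))
      rw [← hrepr] at h1
      have h2 := Finset.le_sup' (fun ν : Fin (M + 1) → Bool => Ew ν e r)
        (Finset.mem_univ (ext μ0))
      refine le_trans ?_ (le_max_left _ _)
      linarith
    | true =>
      have hsig := sigma_eq r d e A hAeq (ext μ0) ν0 (ext_last μ0) hn
      have h1 := Finset.le_sup' (fun μ : Fin M → Bool => Ew (ext μ) (fun j => e j + d j - r j) r)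
        (Finset.mem_univ (fun j => ν0 j.castSucc))
      rw [← update_last_false_eq_ext ν0] at h1
      have h2 := Finset.le_sup' (fun ν : Fin (M + 1) → Bool => Ew ν (fun j => e j + r j) r)
        (Finset.mem_univ (Function.update (ext μ0) (Fin.last M) true))
      refine le_trans ?_ (le_max_right _ _)
      linarith
  · -- RHS ≤ LHS
    apply max_le
    · -- term 1
      obtain ⟨μ1, -, hμ1⟩ := Finset.exists_mem_eq_sup' Finset.univ_nonempty
        (fun μ : Fin M → Bool => Ew (ext μ) (fun j => e j + d j) r)
      obtain ⟨ν1, -, hν1⟩ := Finset.exists_mem_eq_sup' Finset.univ_nonempty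
        (fun ν : Fin (M + 1) → Bool => Ew ν e r)
      rw [hμ1, hν1]
      cases hn : ν1 (Fin.last M) with
      | false =>
        have hrepr := eq_ext_of_last_false hn
        have h1 := Finset.le_sup' (fun μ : Fin M → Bool => Ew (ext μ) e r)
          (Finset.mem_univ (fun j => ν1 j.castSucc))
        rw [← hrepr] at h1
        have h2 := Finset.le_sup' (fun ν : Fin (M + 1) → Bool => Ew ν (fun j => e j + d j) r)
          (Finset.mem_univ (ext μ1))
        linarith
      | true =>
        by_cases hsub : ∀ j, ext μ1 j = true → ν1 j = true
        · have hstep := ge1a r d e hr0 hdL (ext μ1) ν1 (ext_last μ1) hn hsub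
          have h1 := Finset.le_sup' (fun μ : Fin M → Bool => Ew (ext μ) e r)
            (Finset.mem_univ (fun j => ν1 j.castSucc))
          rw [← update_last_false_eq_ext ν1] at h1
          have h2 := Finset.le_sup' (fun ν : Fin (M + 1) → Bool => Ew ν (fun j => e j + d j) r)
            (Finset.mem_univ (Function.update (ext μ1) (Fin.last M) true))
          linarith
        · push_neg at hsub
          obtain ⟨j0, hj0a, hj0b⟩ := hsub
          have hj0b' : ν1 j0 = false := by simpa using hj0b
          have hne : (Finset.univ.filter (fun j => ext μ1 j = true ∧ ν1 j = false)).Nonempty :=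
            ⟨j0, Finset.mem_filter.mpr ⟨Finset.mem_univ _, hj0a, hj0b'⟩⟩
          obtain ⟨x, hxmem, hxtop⟩ : ∃ x ∈ Finset.univ.filter
              (fun j => ext μ1 j = true ∧ ν1 j = false), ∀ j ∈ Finset.univ.filter
              (fun j => ext μ1 j = true ∧ ν1 j = false), j ≤ x :=
            ⟨_, Finset.max'_mem _ hne, fun j hj => Finset.le_max' _ j hj⟩
          obtain ⟨-, hax, hbx⟩ := Finset.mem_filter.mp hxmem
          have hmax : ∀ j, x < j → ext μ1 j = true → ν1 j = true := by
            intro j hj hja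
            by_contra hjb
            have hjb' : ν1 j = false := by simpa using hjb
            exact absurd (hxtop j (Finset.mem_filter.mpr ⟨Finset.mem_univ _, hja, hjb'⟩))
              (not_le.2 hj)
          have hstep := ge1b r d e hr0 hrm hdm (ext μ1) ν1 (ext_last μ1) hn x hax hbx hmax
          have hxl : x ≠ Fin.last M := by
            intro h
            rw [h, hn] at hbx
            simp at hbx
          have hlastval : Function.update (Function.update ν1 (Fin.last M) false) x true
              (Fin.last M) = false := by
            rw [Function.update_of_ne (Ne.symm hxl), Function.update_self]
          have hrepr2 := eq_ext_of_last_false hlastval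
          have h1 := Finset.le_sup' (fun μ : Fin M → Bool => Ew (ext μ) e r)
            (Finset.mem_univ (fun j =>
              (Function.update (Function.update ν1 (Fin.last M) false) x true) j.castSucc))
          rw [← hrepr2] at h1
          have h2 := Finset.le_sup' (fun ν : Fin (M + 1) → Bool => Ew ν (fun j => e j + d j) r)
            (Finset.mem_univ (Function.update (Function.update (ext μ1) (Fin.last M) true) x false))
          linarith
    · -- term 2
      obtain ⟨μ2, -, hμ2⟩ := Finset.exists_mem_eq_sup' Finset.univ_nonempty
        (fun μ : Fin M → Bool => Ew (ext μ) (fun j => e j + d j - r j) r)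
      obtain ⟨ν2, -, hν2⟩ := Finset.exists_mem_eq_sup' Finset.univ_nonempty
        (fun ν : Fin (M + 1) → Bool => Ew ν (fun j => e j + r j) r)
      rw [hμ2, hν2]
      cases hn : ν2 (Fin.last M) with
      | true =>
        have hcollapse1 : Function.update (Function.update (ext μ2) (Fin.last M) true)
            (Fin.last M) false = ext μ2 := by
          rw [Function.update_idem, show (false) = ext μ2 (Fin.last M) from (ext_last μ2).symm,
            Function.update_eq_self]
        have hcollapse2 : Function.update (Function.update ν2 (Fin.last M) false)
            (Fin.last M) true = ν2 := by
          rw [Function.update_idem, show (true) = ν2 (Fin.last M) from hn.symm,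
            Function.update_eq_self]
        have hsig := sigma_eq r d e A hAeq (Function.update ν2 (Fin.last M) false)
          (Function.update (ext μ2) (Fin.last M) true)
          (Function.update_self _ _ _) (Function.update_self _ _ _)
        rw [hcollapse1, hcollapse2] at hsig
        have h1 := Finset.le_sup' (fun μ : Fin M → Bool => Ew (ext μ) e r)
          (Finset.mem_univ (fun j => ν2 j.castSucc))
        rw [← update_last_false_eq_ext ν2] at h1
        have h2 := Finset.le_sup' (fun ν : Fin (M + 1) → Bool => Ew ν (fun j => e j + d j) r)
          (Finset.mem_univ (Function.update (ext μ2) (Fin.last M) true))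
        linarith
      | false =>
        by_cases hsub : ∀ j, ν2 j = true → ext μ2 j = true
        · have hstep := ge2a r d e A hr0 hA0 (ext μ2) ν2 hsub
          have hrepr := eq_ext_of_last_false hn
          have h1 := Finset.le_sup' (fun μ : Fin M → Bool => Ew (ext μ) e r)
            (Finset.mem_univ (fun j => ν2 j.castSucc))
          rw [← hrepr] at h1
          have h2 := Finset.le_sup' (fun ν : Fin (M + 1) → Bool => Ew ν (fun j => e j + d j) r)
            (Finset.mem_univ (ext μ2))
          linarith
        · push_neg at hsub
          obtain ⟨j0, hj0a, hj0b⟩ := hsub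
          have hj0b' : ext μ2 j0 = false := by simpa using hj0b
          have hne : (Finset.univ.filter (fun j => ν2 j = true ∧ ext μ2 j = false)).Nonempty :=
            ⟨j0, Finset.mem_filter.mpr ⟨Finset.mem_univ _, hj0a, hj0b'⟩⟩
          obtain ⟨z, hzmem, hztop⟩ : ∃ z ∈ Finset.univ.filter
              (fun j => ν2 j = true ∧ ext μ2 j = false), ∀ j ∈ Finset.univ.filter
              (fun j => ν2 j = true ∧ ext μ2 j = false), j ≤ z :=
            ⟨_, Finset.max'_mem _ hne, fun j hj => Finset.le_max' _ j hj⟩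
          obtain ⟨-, hbz, haz⟩ := Finset.mem_filter.mp hzmem
          have hmax : ∀ j, z < j → ν2 j = true → ext μ2 j = true := by
            intro j hj hja
            by_contra hjb
            have hjb' : ext μ2 j = false := by simpa using hjb
            exact absurd (hztop j (Finset.mem_filter.mpr ⟨Finset.mem_univ _, hja, hjb'⟩))
              (not_le.2 hj)
          have hstep := ge2b r d e A hr0 hrm hAz (ext μ2) ν2 z hbz haz hmax
          have hlastval : Function.update ν2 z false (Fin.last M) = false := by
            rcases eq_or_ne (Fin.last M) z with h | h
            · rw [h, Function.update_self]
            · rw [Function.update_of_ne h, hn]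
          have hrepr2 := eq_ext_of_last_false hlastval
          have h1 := Finset.le_sup' (fun μ : Fin M → Bool => Ew (ext μ) e r)
            (Finset.mem_univ (fun j => (Function.update ν2 z false) j.castSucc))
          rw [← hrepr2] at h1
          have h2 := Finset.le_sup' (fun ν : Fin (M + 1) → Bool => Ew ν (fun j => e j + d j) r)
            (Finset.mem_univ (Function.update (ext μ2) z true))
          linarith
end BT

lemma typeIMax_eq (N : ℕ) (s r : Fin N → ℝ) :
    typeIMax N s r = Finset.univ.sup' Finset.univ_nonempty
      (fun μ : Fin N → Bool => BT.Ew μ s r) := rfl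

theorem backlund_typeI (N : ℕ) (hN : 1 ≤ N) (p q c : Fin (N + 1) → ℝ)
    (hp0 : ∀ j, 0 ≤ p j) (hpmono : Monotone p)
    (hq0 : ∀ j, 0 ≤ q j) (hqmono : Monotone q)
    (hpq0 : ∀ j, 0 ≤ p j - q j) (hpqmono : Monotone fun j => p j - q j)
    (k l : ℝ) (hk : 0 ≤ k) (hl : 0 ≤ l)
    (r : Fin (N + 1) → ℝ) (hr : ∀ j, r j = k * p j + l * q j)
    (f g : ℝ → ℝ → ℝ)
    (hf : ∀ n i : ℝ, f n i = typeIMax N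
      (fun j => p j.castSucc * n - q j.castSucc * i + c j.castSucc)
      (fun j => r j.castSucc))
    (hg : ∀ n i : ℝ, g n i = typeIMax (N + 1) (fun j => p j * n - q j * i + c j) r)
    (α β A : ℝ) (hα0 : 0 ≤ α) (hαk : α ≤ k)
    (hβ1 : -k - l + α ≤ β) (hβ2 : β ≤ α)
    (hA : A = (k - α) * p (Fin.last N) + (l + β) * q (Fin.last N)) :
    ∀ n i : ℝ,
      f n i + g (n + α) (i + β) =
        max (f (n + α) (i + β) + g n i)
            (f (n - k + α) (i + l + β) + g (n + k) (i - l) - A) := by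
  intro n i
  -- parameter facts
  have hrm : Monotone r := by
    intro j j' hj
    rw [hr j, hr j']
    have h1 := mul_le_mul_of_nonneg_left (hpmono hj) hk
    have h2 := mul_le_mul_of_nonneg_left (hqmono hj) hl
    linarith
  have hr0' : ∀ j, 0 ≤ r j := fun j => by
    rw [hr j]
    exact add_nonneg (mul_nonneg hk (hp0 j)) (mul_nonneg hl (hq0 j))
  have hdm : Monotone (fun j : Fin (N + 1) => α * p j - β * q j) := by
    intro j j' hj
    have h1 : p j ≤ p j' := hpmono hj
    have h2 : q j ≤ q j' := hqmono hj
    have h3 : p j - q j ≤ p j' - q j' := hpqmono hj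
    show α * p j - β * q j ≤ α * p j' - β * q j'
    rcases le_or_gt 0 β with hβ | hβ
    · nlinarith [mul_nonneg (sub_nonneg.2 hβ2) (sub_nonneg.2 h1), mul_nonneg hβ (sub_nonneg.2 h3)]
    · nlinarith [mul_nonneg hα0 (sub_nonneg.2 h1),
        mul_nonneg (by linarith : (0:ℝ) ≤ -β) (sub_nonneg.2 h2)]
  have hdL : 0 ≤ α * p (Fin.last N) - β * q (Fin.last N) := by
    rcases le_or_gt 0 β with hβ | hβ
    · nlinarith [mul_nonneg (sub_nonneg.2 hβ2) (hp0 (Fin.last N)), mul_nonneg hβ (hpq0 (Fin.last N))]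
    · nlinarith [mul_nonneg hα0 (hp0 (Fin.last N)),
        mul_nonneg (by linarith : (0:ℝ) ≤ -β) (hq0 (Fin.last N))]
  have hAeq : A = r (Fin.last N) - (α * p (Fin.last N) - β * q (Fin.last N)) := by
    rw [hA, hr]
    ring
  have hAz : ∀ j : Fin (N + 1), r j - (α * p j - β * q j) ≤ A := by
    intro j
    rw [hA, hr]
    have h1 : p j ≤ p (Fin.last N) := hpmono (Fin.le_last j)
    have h2 : q j ≤ q (Fin.last N) := hqmono (Fin.le_last j)
    have h3 : p j - q j ≤ p (Fin.last N) - q (Fin.last N) := hpqmono (Fin.le_last j)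
    rcases le_or_gt 0 (l + β) with hlβ | hlβ
    · nlinarith [mul_nonneg (sub_nonneg.2 hαk) (sub_nonneg.2 h1), mul_nonneg hlβ (sub_nonneg.2 h2)]
    · nlinarith [mul_nonneg (by linarith : (0:ℝ) ≤ k - α + (l + β)) (sub_nonneg.2 h1),
        mul_nonneg (by linarith : (0:ℝ) ≤ -(l + β)) (sub_nonneg.2 h3)]
  have hA0 : 0 ≤ A := by
    rw [hA]
    rcases le_or_gt 0 (l + β) with hlβ | hlβ
    · nlinarith [mul_nonneg (sub_nonneg.2 hαk) (hp0 (Fin.last N)), mul_nonneg hlβ (hq0 (Fin.last N))]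
    · nlinarith [mul_nonneg (by linarith : (0:ℝ) ≤ k - α + (l + β)) (hp0 (Fin.last N)),
        mul_nonneg (by linarith : (0:ℝ) ≤ -(l + β)) (hpq0 (Fin.last N))]
  -- sup'-form conversions
  have hfE : ∀ (x y : ℝ) (w : Fin (N + 1) → ℝ),
      (∀ j : Fin N, p j.castSucc * x - q j.castSucc * y + c j.castSucc = w j.castSucc) →
      f x y = Finset.univ.sup' Finset.univ_nonempty
        (fun μ : Fin N → Bool => BT.Ew (BT.ext μ) w r) := by
    intro x y w hw
    rw [hf, typeIMax_eq]
    apply Finset.sup'_congr Finset.univ_nonempty rfl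
    intro μ _
    rw [BT.Ew_ext]
    congr 1
    funext j
    exact hw j
  have hgE : ∀ (x y : ℝ) (w : Fin (N + 1) → ℝ),
      (∀ j, p j * x - q j * y + c j = w j) →
      g x y = Finset.univ.sup' Finset.univ_nonempty
        (fun ν : Fin (N + 1) → Bool => BT.Ew ν w r) := by
    intro x y w hw
    rw [hg, typeIMax_eq]
    apply Finset.sup'_congr Finset.univ_nonempty rfl
    intro ν _
    congr 1
    funext j
    exact hw j
  have hw0 : ∀ j : Fin (N + 1), p j * n - q j * i + c j
      = (fun j : Fin (N + 1) => p j * n - q j * i + c j) j := fun j => rfl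
  have hw1 : ∀ j : Fin (N + 1), p j * (n + α) - q j * (i + β) + c j
      = (fun j : Fin (N + 1) => p j * n - q j * i + c j) j
        + (fun j : Fin (N + 1) => α * p j - β * q j) j := by
    intro j
    simp only
    ring
  have hw2 : ∀ j : Fin (N + 1), p j * (n - k + α) - q j * (i + l + β) + c j
      = (fun j : Fin (N + 1) => p j * n - q j * i + c j) j
        + (fun j : Fin (N + 1) => α * p j - β * q j) j - r j := by
    intro j
    rw [hr j]
    simp only
    ring
  have hw3 : ∀ j : Fin (N + 1), p j * (n + k) - q j * (i - l) + c j
      = (fun j : Fin (N + 1) => p j * n - q j * i + c j) j + r j := by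
    intro j
    rw [hr j]
    simp only
    ring
  rw [hfE n i (fun j : Fin (N + 1) => p j * n - q j * i + c j) (fun j => hw0 j.castSucc),
    hgE (n + α) (i + β) (fun j => (fun j : Fin (N + 1) => p j * n - q j * i + c j) j + (fun j : Fin (N + 1) => α * p j - β * q j) j) hw1,
    hfE (n + α) (i + β) (fun j => (fun j : Fin (N + 1) => p j * n - q j * i + c j) j + (fun j : Fin (N + 1) => α * p j - β * q j) j) (fun j => hw1 j.castSucc),
    hgE n i (fun j : Fin (N + 1) => p j * n - q j * i + c j) hw0,
    hfE (n - k + α) (i + l + β) (fun j => (fun j : Fin (N + 1) => p j * n - q j * i + c j) j + (fun j : Fin (N + 1) => α * p j - β * q j) j - r j) (fun j => hw2 j.castSucc),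
    hgE (n + k) (i - l) (fun j => (fun j : Fin (N + 1) => p j * n - q j * i + c j) j + r j) hw3]
  exact BT.main_core r (fun j : Fin (N + 1) => α * p j - β * q j)
    (fun j : Fin (N + 1) => p j * n - q j * i + c j) A hr0' hrm hdm hdL hA0 hAz hAeq
end

section
/- Let N ≥ 1 and let p_1,...,p_{N+1}, q_1,...,q_{N+1}, c_1,...,c_{N+1} be reals satisfying 0 ≤ p_1 ≤ ... ≤ p_{N+1}, 0 ≤ q_1 ≤ ... ≤ q_{N+1}, and 0 ≤ p_1 − q_1 ≤ ... ≤ p_{N+1} − q_{N+1}. Let k, l ≥ 0 and set s_j(n,i) = p_j·n − q_j·i + c_j and r_j = k·p_j + l·q_j. Define f̃^n_i as the ultradiscrete permanent of the N×N matrix whose (j,m) entry (m = 1,...,N) is |s_j(n,i) + (−N−1+2m)·r_j/2|, and define g̃^n_i as the ultradiscrete permanent of the (N+1)×(N+1) matrix whose (j,m) entry (m = 1,...,N+1) is |s_j(n,i) + (−N−3+2m)·r_j/2|. Let α, β be reals with 0 ≤ α ≤ k and −k−l+α ≤ β ≤ α, and set A = (k−α)·p_{N+1} + (l+β)·q_{N+1}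 and B = α·p_{N+1} − β·q_{N+1}. Then for all real n, i: f̃^n_i + g̃^{n+α}_{i+β} = max( f̃^{n+α}_{i+β} + g̃^n_i − B, f̃^{n−k+α}_{i+l+β} + g̃^{n+k}_{i−l} − A ). -/
/-!
Both sides are ultradiscrete permanents of the form `max_π ∑ j, |x j + (t + π j) * r j|`.
When `|r j| ≤ r last` for the earlier rows, an optimal permutation can be taken to send the last
row to the first or to the last column, so a permanent of size `m + 1` is a two-term maximum of
permanents of size `m`. Expanding the three `(N+1)`-soliton terms in this way, two of the four
branch comparisons are exact identities, and the other two reduce to the increment inequality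
`F(t, x + b) + F(t - 1, x) ≤ F(t, x) + F(t - 1, x + b) + 2 b_N` for nonnegative monotone `b`,
applied to `b_j = α p_j - β q_j` and to `a_j = (k - α) p_j + (l + β) q_j` (so that `a + b = r`).
The increment inequality follows by induction on the size from the same recursion.
-/

open Finset

/-- The ultradiscrete permanent of an `M × M` real matrix:
the maximum over all permutations `π` of `Σ_j a j (π j)`. -/
noncomputable def uperm (M : ℕ) (a : Fin M → Fin M → ℝ) : ℝ :=
  Finset.univ.sup' Finset.univ_nonempty fun π : Equiv.Perm (Fin M) => ∑ j, a j (π j)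

theorem Equiv.Perm.exists_castSucc_eq_succAbove {m : ℕ} (π : Equiv.Perm (Fin (m + 1))) :
    ∃ σ : Equiv.Perm (Fin m), ∀ j, π j.castSucc = (π (Fin.last m)).succAbove (σ j) := by
  set τ := ((finSuccEquiv' (Fin.last m)).symm.trans π).trans (finSuccEquiv' (π (Fin.last m)))
  have hτ : ∀ j, τ (some j) = finSuccEquiv' (π (Fin.last m)) (π j.castSucc) := fun j => by
    simp [τ, ← Fin.succAbove_last]
  have hτ_none : τ none = none := by simp [τ]
  refine ⟨Equiv.removeNone τ, fun j => ?_⟩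
  rw [← finSuccEquiv'_eq_some, ← hτ, Equiv.removeNone_some]
  exact Option.ne_none_iff_exists'.mp fun h => by simpa using τ.injective (h.trans hτ_none.symm)

theorem Equiv.Perm.exists_last_eq_and_castSucc_eq {m : ℕ} (e : Fin (m + 1))
    (σ : Equiv.Perm (Fin m)) :
    ∃ π : Equiv.Perm (Fin (m + 1)), π (Fin.last m) = e ∧ ∀ j, π j.castSucc = e.succAbove (σ j) :=
  ⟨((finSuccEquiv' (Fin.last m)).trans (Equiv.optionCongr σ)).trans (finSuccEquiv' e).symm,
    by simp, fun j => by simp [finSuccEquiv'_last_apply_castSucc]⟩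

theorem Fin.castSucc_le_succAbove {m : ℕ} (e : Fin (m + 1)) (k : Fin m) :
    k.castSucc ≤ e.succAbove k := by
  rcases Fin.lt_or_le k.castSucc e with h | h
  · rw [Fin.succAbove_of_castSucc_lt _ _ h]
  · rw [Fin.succAbove_of_le_castSucc _ _ h]
    exact Fin.castSucc_le_succ k

theorem Fin.succAbove_le_succ {m : ℕ} (e : Fin (m + 1)) (k : Fin m) :
    e.succAbove k ≤ k.succ := by
  rcases Fin.lt_or_le k.castSucc e with h | h
  · rw [Fin.succAbove_of_castSucc_lt _ _ h]
    exact Fin.castSucc_le_succ k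
  · rw [Fin.succAbove_of_le_castSucc _ _ h]

theorem Fin.sum_val_succAbove_sub_val {m : ℕ} (e : Fin (m + 1)) :
    ∑ k : Fin m, (((e.succAbove k : ℕ) : ℝ) - (k : ℕ)) = m - e := by
  have h := Fin.sum_univ_succAbove (fun i : Fin (m + 1) => ((i : ℕ) : ℝ)) e
  rw [Fin.sum_univ_castSucc] at h
  simp only [Fin.val_castSucc, Fin.val_last] at h
  rw [Finset.sum_sub_distrib]
  linarith

theorem Fin.init_add {n : ℕ} {α : Type*} [Add α] (x y : Fin (n + 1) → α) :
    Fin.init (x + y) = Fin.init x + Fin.init y :=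
  rfl

theorem Fin.init_sub {n : ℕ} {α : Type*} [Sub α] (x y : Fin (n + 1) → α) :
    Fin.init (x - y) = Fin.init x - Fin.init y :=
  rfl

theorem Monotone.fin_init {n : ℕ} {α : Type*} [Preorder α] {x : Fin (n + 1) → α}
    (hx : Monotone x) : Monotone (Fin.init x) :=
  fun _ _ h => hx (Fin.castSucc_le_castSucc_iff.2 h)

theorem abs_add_mul_le_abs_add_mul_add {x u v r ρ : ℝ} (hr : |r| ≤ ρ) :
    |x + u * r| ≤ |x + v * r| + |u - v| * ρ :=
  calc |x + u * r| = |(x + v * r) + (u - v) * r| := by ring_nf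
    _ ≤ |x + v * r| + |u - v| * |r| := by rw [← abs_mul]; exact abs_add_le _ _
    _ ≤ |x + v * r| + |u - v| * ρ := by gcongr

theorem nonneg_monotone_mul_add_mul {ι : Type*} [Preorder ι] {u v : ι → ℝ} {c₁ c₂ : ℝ}
    (hu₀ : ∀ j, 0 ≤ u j) (hu : Monotone u) (hv₀ : ∀ j, 0 ≤ v j) (hv : Monotone v)
    (hc₁ : 0 ≤ c₁) (hc₂ : 0 ≤ c₂) :
    0 ≤ (fun j => c₁ * u j + c₂ * v j) ∧ Monotone fun j => c₁ * u j + c₂ * v j :=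
  ⟨fun j => add_nonneg (mul_nonneg hc₁ (hu₀ j)) (mul_nonneg hc₂ (hv₀ j)),
    (hu.const_mul hc₁).add (hv.const_mul hc₂)⟩

theorem nonneg_monotone_mul_sub_mul {ι : Type*} [Preorder ι] {p q : ι → ℝ}
    (hp₀ : ∀ j, 0 ≤ p j) (hp : Monotone p) (hq₀ : ∀ j, 0 ≤ q j) (hq : Monotone q)
    (hpq₀ : ∀ j, 0 ≤ p j - q j) (hpq : Monotone fun j => p j - q j) {α β : ℝ}
    (hα : 0 ≤ α) (hβ : β ≤ α) :
    0 ≤ (fun j => α * p j - β * q j) ∧ Monotone fun j => α * p j - β * q j := by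
  rcases le_total β 0 with hβ₀ | hβ₀
  · convert nonneg_monotone_mul_add_mul hp₀ hp hq₀ hq hα (neg_nonneg.2 hβ₀) using 2 <;>
      ext j <;> ring
  · convert nonneg_monotone_mul_add_mul hp₀ hp hpq₀ hpq (sub_nonneg.2 hβ) hβ₀ using 2 <;>
      ext j <;> ring

section uperm

variable {M : ℕ}

theorem sum_le_uperm (a : Fin M → Fin M → ℝ) (π : Equiv.Perm (Fin M)) :
    ∑ j, a j (π j) ≤ uperm M a :=
  Finset.le_sup' (fun π : Equiv.Perm (Fin M) => ∑ j, a j (π j)) (Finset.mem_univ π)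

theorem uperm_le_iff {a : Fin M → Fin M → ℝ} {c : ℝ} :
    uperm M a ≤ c ↔ ∀ π : Equiv.Perm (Fin M), ∑ j, a j (π j) ≤ c := by
  simp [uperm]

theorem uperm_zero (a : Fin 0 → Fin 0 → ℝ) : uperm 0 a = 0 :=
  le_antisymm (uperm_le_iff.2 fun _ => by simp) (by simpa using sum_le_uperm a 1)

theorem uperm_le_uperm_add_sum {a b : Fin M → Fin M → ℝ} {c : Fin M → ℝ}
    (h : ∀ j k, a j k ≤ b j k + c k) : uperm M a ≤ uperm M b + ∑ k, c k :=
  uperm_le_iff.2 fun π =>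
    calc ∑ j, a j (π j) ≤ ∑ j, b j (π j) + ∑ j, c (π j) := by
          rw [← Finset.sum_add_distrib]; exact Finset.sum_le_sum fun j _ => h j (π j)
      _ ≤ uperm M b + ∑ k, c k := by rw [Equiv.sum_comp]; gcongr; exact sum_le_uperm b π

theorem uperm_succ_eq_sup_last_row {m : ℕ} (a : Fin (m + 1) → Fin (m + 1) → ℝ) :
    uperm (m + 1) a = Finset.univ.sup' Finset.univ_nonempty fun e =>
      a (Fin.last m) e + uperm m fun j k => a j.castSucc (e.succAbove k) := by
  apply le_antisymm
  · refine uperm_le_iff.2 fun π => ?_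
    obtain ⟨σ, hσ⟩ := π.exists_castSucc_eq_succAbove
    calc ∑ j, a j (π j)
        = a (Fin.last m) (π (Fin.last m)) +
            ∑ j, a j.castSucc ((π (Fin.last m)).succAbove (σ j)) := by
          rw [Fin.sum_univ_castSucc, add_comm]; simp only [hσ]
      _ ≤ _ := by
          gcongr; exact sum_le_uperm (fun j k => a j.castSucc ((π (Fin.last m)).succAbove k)) σ
      _ ≤ _ := Finset.le_sup' (fun e => a (Fin.last m) e +
            uperm m fun j k => a j.castSucc (e.succAbove k)) (Finset.mem_univ _)
  · refine Finset.sup'_le _ _ fun e _ => ?_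
    suffices uperm m (fun j k => a j.castSucc (e.succAbove k)) ≤
        uperm (m + 1) a - a (Fin.last m) e by linarith
    refine uperm_le_iff.2 fun σ => ?_
    obtain ⟨π, hπ_last, hπ⟩ := Equiv.Perm.exists_last_eq_and_castSucc_eq e σ
    have h := sum_le_uperm a π
    rw [Fin.sum_univ_castSucc] at h
    simp only [hπ_last, hπ] at h
    linarith

end uperm

/-- With `t = (1 - N) / 2` and `t = (1 - N) / 2 - 1` this gives the paper's `f̃` and `g̃`;
columns are numbered from `0` here and from `1` in the paper. -/
noncomputable def solitonPerm {M : ℕ} (t : ℝ) (x r : Fin M → ℝ) : ℝ :=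
  uperm M fun j k => |x j + (t + (k : ℕ)) * r j|

section solitonPerm

variable {m : ℕ}

theorem solitonPerm_zero (t : ℝ) (x r : Fin 0 → ℝ) : solitonPerm t x r = 0 :=
  uperm_zero _

theorem solitonPerm_add_self (t : ℝ) (x r : Fin m → ℝ) :
    solitonPerm t (x + r) r = solitonPerm (t + 1) x r := by
  simp only [solitonPerm, Pi.add_apply]
  congr 1; ext j k; congr 1; ring

theorem solitonPerm_sub_self (t : ℝ) (x r : Fin m → ℝ) :
    solitonPerm t (x - r) r = solitonPerm (t - 1) x r := by
  simp only [solitonPerm, Pi.sub_apply]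
  congr 1; ext j k; congr 1; ring

theorem uperm_succAbove_le_solitonPerm (t : ℝ) (x r : Fin m → ℝ) {ρ : ℝ} (hr : ∀ j, |r j| ≤ ρ)
    (e : Fin (m + 1)) :
    uperm m (fun j k => |x j + (t + (e.succAbove k : ℕ)) * r j|) ≤
      solitonPerm t x r + (m - e) * ρ := by
  rw [← Fin.sum_val_succAbove_sub_val, Finset.sum_mul]
  refine uperm_le_uperm_add_sum fun j k => ?_
  have hk : ((k : ℕ) : ℝ) ≤ (e.succAbove k : ℕ) := by
    exact_mod_cast Fin.castSucc_le_succAbove e k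
  have h := abs_add_mul_le_abs_add_mul_add (x := x j) (u := t + (e.succAbove k : ℕ))
    (v := t + (k : ℕ)) (hr j)
  rwa [add_sub_add_left_eq_sub, abs_of_nonneg (sub_nonneg.2 hk)] at h

theorem uperm_succAbove_le_solitonPerm_add_one (t : ℝ) (x r : Fin m → ℝ) {ρ : ℝ}
    (hr : ∀ j, |r j| ≤ ρ) (e : Fin (m + 1)) :
    uperm m (fun j k => |x j + (t + (e.succAbove k : ℕ)) * r j|) ≤
      solitonPerm (t + 1) x r + e * ρ := by
  have hsum : ∑ k : Fin m, ((k : ℕ) + 1 - ((e.succAbove k : ℕ) : ℝ)) = e := by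
    have := Fin.sum_val_succAbove_sub_val e
    simp only [Finset.sum_sub_distrib, Finset.sum_add_distrib] at this ⊢
    simp only [Finset.sum_const, Finset.card_univ, Fintype.card_fin, nsmul_eq_mul, mul_one]
    linarith
  rw [← hsum, Finset.sum_mul]
  refine uperm_le_uperm_add_sum fun j k => ?_
  have hk : ((e.succAbove k : ℕ) : ℝ) ≤ (k : ℕ) + 1 := by
    exact_mod_cast Fin.succAbove_le_succ e k
  have h := abs_add_mul_le_abs_add_mul_add (x := x j) (u := t + (e.succAbove k : ℕ))
    (v := t + 1 + (k : ℕ)) (hr j)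
  rwa [show t + (e.succAbove k : ℕ) - (t + 1 + (k : ℕ)) = (e.succAbove k : ℕ) - ((k : ℕ) + 1 : ℝ)
    by ring, abs_of_nonpos (sub_nonpos.2 hk), neg_sub] at h

theorem solitonPerm_succ (t : ℝ) (y r : Fin (m + 1) → ℝ)
    (hr : ∀ j, |Fin.init r j| ≤ r (Fin.last m)) :
    solitonPerm t y r =
      max (y (Fin.last m) + (t + m) * r (Fin.last m) + solitonPerm t (Fin.init y) (Fin.init r))
        (-(y (Fin.last m) + t * r (Fin.last m)) +
          solitonPerm (t + 1) (Fin.init y) (Fin.init r)) := by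
  set minor := fun e : Fin (m + 1) =>
    uperm m fun j k => |Fin.init y j + (t + (e.succAbove k : ℕ)) * Fin.init r j|
  have h_last : minor (Fin.last m) = solitonPerm t (Fin.init y) (Fin.init r) := by
    simp [minor, solitonPerm, Fin.succAbove_last]
  have h_zero : minor 0 = solitonPerm (t + 1) (Fin.init y) (Fin.init r) := by
    simp only [minor, solitonPerm, Fin.succAbove_zero, Fin.val_succ]
    congr 1; ext j k; congr 1; push_cast; ring
  rw [solitonPerm, uperm_succ_eq_sup_last_row]
  change univ.sup' _ (fun e : Fin (m + 1) =>
    |y (Fin.last m) + (t + (e : ℕ)) * r (Fin.last m)| + minor e) = _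
  apply le_antisymm
  · refine Finset.sup'_le _ _ fun e _ => ?_
    have h_top := uperm_succAbove_le_solitonPerm t (Fin.init y) (Fin.init r) hr e
    have h_bot := uperm_succAbove_le_solitonPerm_add_one t (Fin.init y) (Fin.init r) hr e
    rcases abs_cases (y (Fin.last m) + (t + (e : ℕ)) * r (Fin.last m)) with ⟨h, -⟩ | ⟨h, -⟩ <;>
      rw [h]
    · exact le_max_of_le_left (by linarith)
    · exact le_max_of_le_right (by linarith)
  · refine max_le ?_ ?_
    · refine le_trans ?_ (Finset.le_sup' _ (mem_univ (Fin.last m)))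
      simpa [h_last] using le_abs_self _
    · refine le_trans ?_ (Finset.le_sup' _ (mem_univ 0))
      simpa [h_zero] using neg_le_abs (y (Fin.last m) + t * r (Fin.last m))

theorem abs_init_le_last {R : Fin (m + 1) → ℝ} (hR₀ : 0 ≤ R) (hR : Monotone R) (j : Fin m) :
    |Fin.init R j| ≤ R (Fin.last m) := by
  rw [Fin.init, abs_of_nonneg (hR₀ j.castSucc)]
  exact hR (Fin.le_last _)

theorem solitonPerm_add_le (t : ℝ) (x R b : Fin m → ℝ) {ρ : ℝ}
    (hR₀ : 0 ≤ R) (hR : Monotone R) (hb₀ : 0 ≤ b) (hb : Monotone b) (hbρ : ∀ j, b j ≤ ρ)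
    (hρ : 0 ≤ ρ) :
    solitonPerm t (x + b) R + solitonPerm (t - 1) x R ≤
      solitonPerm t x R + solitonPerm (t - 1) (x + b) R + 2 * ρ := by
  induction m generalizing t ρ with
  | zero => simp [solitonPerm_zero, hρ]
  | succ m ih =>
    have hR' := abs_init_le_last hR₀ hR
    -- the bound `b (Fin.last m)`, not `ρ`, is what makes the mixed branches close
    have ih' := fun s y => ih s y (Fin.init R) (Fin.init b) (fun j => hR₀ _) hR.fin_init
      (fun j => hb₀ _) hb.fin_init (ρ := b (Fin.last m)) (fun j => hb (Fin.le_last _)) (hb₀ _)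
    have ih_t := ih' t (Fin.init x)
    have ih_succ := ih' (t + 1) (Fin.init x)
    rw [add_sub_cancel_right] at ih_succ
    obtain ⟨hS₁, hS₂⟩ := max_le_iff.1 (solitonPerm_succ t x R hR').ge
    obtain ⟨hT₁, hT₂⟩ := max_le_iff.1 (solitonPerm_succ (t - 1) (x + b) R hR').ge
    rw [solitonPerm_succ t (x + b) R hR', solitonPerm_succ (t - 1) x R hR', sub_add_cancel]
    rw [sub_add_cancel] at hT₂
    simp only [Pi.add_apply, Fin.init_add, max_add, add_max, max_le_iff] at hT₁ hT₂ ⊢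
    have hbρ := hbρ (Fin.last m)
    refine ⟨⟨?_, ?_⟩, ?_, ?_⟩ <;> linarith

theorem solitonPerm_backlund (t : ℝ) (x a b : Fin (m + 1) → ℝ)
    (ha₀ : 0 ≤ a) (ha : Monotone a) (hb₀ : 0 ≤ b) (hb : Monotone b) :
    solitonPerm t (Fin.init x) (Fin.init (a + b)) + solitonPerm (t - 1) (x + b) (a + b) =
      max (solitonPerm t (Fin.init (x + b)) (Fin.init (a + b)) + solitonPerm (t - 1) x (a + b) -
          b (Fin.last m))
        (solitonPerm t (Fin.init (x + b - (a + b))) (Fin.init (a + b)) +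
          solitonPerm (t - 1) (x + (a + b)) (a + b) - a (Fin.last m)) := by
  set R := a + b with hR_def
  have hR := abs_init_le_last (add_nonneg ha₀ hb₀) (ha.add hb)
  have h_inc_b := solitonPerm_add_le t (Fin.init x) (Fin.init R) (Fin.init b)
    (fun j => add_nonneg (ha₀ _) (hb₀ _)) (ha.add hb).fin_init (fun j => hb₀ _) hb.fin_init
    (fun j => hb (Fin.le_last _)) (hb₀ (Fin.last m))
  have h_inc_a := solitonPerm_add_le t (Fin.init (x + b)) (Fin.init R) (Fin.init a)
    (fun j => add_nonneg (ha₀ _) (hb₀ _)) (ha.add hb).fin_init (fun j => ha₀ _) ha.fin_init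
    (fun j => ha (Fin.le_last _)) (ha₀ (Fin.last m))
  rw [← Fin.init_add, show x + b + a = x + R by rw [hR_def]; abel, Fin.init_add x R,
    solitonPerm_add_self, solitonPerm_add_self, sub_add_cancel] at h_inc_a
  rw [Fin.init_sub, solitonPerm_sub_self, solitonPerm_add_self, sub_add_cancel]
  have hG_b := solitonPerm_succ (t - 1) (x + b) R hR
  have hG := solitonPerm_succ (t - 1) x R hR
  have hG_R := solitonPerm_succ t x R hR
  rw [sub_add_cancel] at hG_b hG
  obtain ⟨hU₁, hU₂⟩ := max_le_iff.1 hG_b.ge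
  obtain ⟨hV₁, hV₂⟩ := max_le_iff.1 hG.ge
  obtain ⟨hW₁, hW₂⟩ := max_le_iff.1 hG_R.ge
  have hR_last : R (Fin.last m) = a (Fin.last m) + b (Fin.last m) := rfl
  simp only [Pi.add_apply, Fin.init_add] at hG_b hU₁ hU₂ h_inc_a ⊢
  apply le_antisymm
  · rcases (max_choice _ _).imp hG_b.trans hG_b.trans with hU | hU
    · exact le_max_of_le_right (by linarith)
    · exact le_max_of_le_left (by linarith)
  · refine max_le ?_ ?_
    · rcases (max_choice _ _).imp hG.trans hG.trans with hV | hV <;> linarith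
    · rcases (max_choice _ _).imp hG_R.trans hG_R.trans with hW | hW <;> linarith

end solitonPerm

theorem backlund_typeII_general (N : ℕ) (p q c : Fin (N + 1) → ℝ)
    (hp0 : ∀ j, 0 ≤ p j) (hpmono : Monotone p)
    (hq0 : ∀ j, 0 ≤ q j) (hqmono : Monotone q)
    (hpq0 : ∀ j, 0 ≤ p j - q j) (hpqmono : Monotone fun j => p j - q j)
    (k l : ℝ)
    (r : Fin (N + 1) → ℝ) (hr : ∀ j, r j = k * p j + l * q j)
    (f g : ℝ → ℝ → ℝ)
    (hf : ∀ n i : ℝ, f n i = uperm N fun j m =>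
      |(p j.castSucc * n - q j.castSucc * i + c j.castSucc) +
        (2 * ((m : ℕ) : ℝ) - (N : ℝ) + 1) * r j.castSucc / 2|)
    (hg : ∀ n i : ℝ, g n i = uperm (N + 1) fun j m =>
      |(p j * n - q j * i + c j) + (2 * ((m : ℕ) : ℝ) - (N : ℝ) - 1) * r j / 2|)
    (α β A B : ℝ) (hα0 : 0 ≤ α) (hαk : α ≤ k)
    (hβ1 : -k - l + α ≤ β) (hβ2 : β ≤ α)
    (hA : A = (k - α) * p (Fin.last N) + (l + β) * q (Fin.last N))
    (hB : B = α * p (Fin.last N) - β * q (Fin.last N)) :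
    ∀ n i : ℝ,
      f n i + g (n + α) (i + β) =
        max (f (n + α) (i + β) + g n i - B)
            (f (n - k + α) (i + l + β) + g (n + k) (i - l) - A) := by
  intro n i
  set s : ℝ → ℝ → Fin (N + 1) → ℝ := fun n i j => p j * n - q j * i + c j
  obtain ⟨ha₀, ha⟩ := nonneg_monotone_mul_sub_mul hp0 hpmono hq0 hqmono hpq0 hpqmono
    (sub_nonneg.2 hαk) (β := -(l + β)) (by linarith)
  obtain ⟨hb₀, hb⟩ := nonneg_monotone_mul_sub_mul hp0 hpmono hq0 hqmono hpq0 hpqmono hα0 hβ2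
  set a : Fin (N + 1) → ℝ := fun j => (k - α) * p j - -(l + β) * q j
  set b : Fin (N + 1) → ℝ := fun j => α * p j - β * q j
  have hr_ab : r = a + b := by ext j; simp only [hr, a, b, Pi.add_apply]; ring
  have hf' : ∀ n i, f n i = solitonPerm ((1 - N) / 2) (Fin.init (s n i)) (Fin.init r) := by
    intro n i; rw [hf, solitonPerm]; congr 1; ext j m; congr 1; simp only [Fin.init, s]; ring
  have hg' : ∀ n i, g n i = solitonPerm ((1 - N) / 2 - 1) (s n i) r := by
    intro n i; rw [hg, solitonPerm]; congr 1; ext j m; congr 1; simp only [s]; ring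
  have hs_b : s (n + α) (i + β) = s n i + b := by ext j; simp only [s, b, Pi.add_apply]; ring
  have hs_r : s (n + k) (i - l) = s n i + r := by ext j; simp only [s, hr, Pi.add_apply]; ring
  have hs_br : s (n - k + α) (i + l + β) = s n i + b - r := by
    ext j; simp only [s, b, hr, Pi.add_apply, Pi.sub_apply]; ring
  have hA' : A = a (Fin.last N) := by rw [hA]; ring
  rw [hf', hf', hf', hg', hg', hg', hs_b, hs_r, hs_br, hA', hB, hr_ab]
  exact solitonPerm_backlund _ (s n i) a b ha₀ ha hb₀ hb

theorem backlund_typeII (N : ℕ) (hN : 1 ≤ N) (p q c : Fin (N + 1) → ℝ)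
    (hp0 : ∀ j, 0 ≤ p j) (hpmono : Monotone p)
    (hq0 : ∀ j, 0 ≤ q j) (hqmono : Monotone q)
    (hpq0 : ∀ j, 0 ≤ p j - q j) (hpqmono : Monotone fun j => p j - q j)
    (k l : ℝ) (hk : 0 ≤ k) (hl : 0 ≤ l)
    (r : Fin (N + 1) → ℝ) (hr : ∀ j, r j = k * p j + l * q j)
    (f g : ℝ → ℝ → ℝ)
    (hf : ∀ n i : ℝ, f n i = uperm N fun j m =>
      |(p j.castSucc * n - q j.castSucc * i + c j.castSucc) +
        (2 * ((m : ℕ) : ℝ) - (N : ℝ) + 1) * r j.castSucc / 2|)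
    (hg : ∀ n i : ℝ, g n i = uperm (N + 1) fun j m =>
      |(p j * n - q j * i + c j) + (2 * ((m : ℕ) : ℝ) - (N : ℝ) - 1) * r j / 2|)
    (α β A B : ℝ) (hα0 : 0 ≤ α) (hαk : α ≤ k)
    (hβ1 : -k - l + α ≤ β) (hβ2 : β ≤ α)
    (hA : A = (k - α) * p (Fin.last N) + (l + β) * q (Fin.last N))
    (hB : B = α * p (Fin.last N) - β * q (Fin.last N)) :
    ∀ n i : ℝ,
      f n i + g (n + α) (i + β) =
        max (f (n + α) (i + β) + g n i - B)
            (f (n - k + α) (i + l + β) + g (n + k) (i - l) - A) :=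
  backlund_typeII_general N p q c hp0 hpmono hq0 hqmono hpq0 hpqmono k l r hr f g hf hg α β A B hα0
    hαk hβ1 hβ2 hA hB
end

section
/- Let N' ≥ 1, let p_1,...,p_{N'} be reals with 0 ≤ p_1 ≤ ... ≤ p_{N'}, let L ≥ 0, and define q_j = min(p_j, L). Then max( Σ_{j=1}^{N'} (−1)^{N'−j}·(q_j − p_j), q_{N'} − L ) = 0. More precisely: if p_{N'} ≥ L then Σ_{j=1}^{N'} (−1)^{N'−j}·(q_j − p_j) ≤ 0 and q_{N'} − L = 0, while if p_{N'} < L then Σ_{j=1}^{N'} (−1)^{N'−j}·(q_j − p_j) = 0 and q_{N'} − L < 0. -/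
open Finset

lemma ukdv_aux (g : ℕ → ℝ) (hg : ∀ i j : ℕ, i ≤ j → g j ≤ g i) (hneg : ∀ j, g j ≤ 0) :
    ∀ n : ℕ, 1 ≤ n →
      g (n - 1) ≤ (∑ j ∈ range n, (-1 : ℝ) ^ (n - 1 - j) * g j) ∧
      (∑ j ∈ range n, (-1 : ℝ) ^ (n - 1 - j) * g j) ≤ 0 := by
  intro n
  induction n with
  | zero => intro h; omega
  | succ m ih =>
    intro _
    rcases Nat.eq_zero_or_pos m with hm | hm
    · subst hm
      simp [hneg 0]
    · obtain ⟨hlo, hhi⟩ := ih hm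
      have hrw : (∑ j ∈ range (m + 1), (-1 : ℝ) ^ (m + 1 - 1 - j) * g j)
          = g m - (∑ j ∈ range m, (-1 : ℝ) ^ (m - 1 - j) * g j) := by
        rw [Finset.sum_range_succ]
        have h1 : (∑ j ∈ range m, (-1 : ℝ) ^ (m + 1 - 1 - j) * g j)
            = ∑ j ∈ range m, -((-1 : ℝ) ^ (m - 1 - j) * g j) := by
          apply Finset.sum_congr rfl
          intro j hj
          have hj' : j < m := Finset.mem_range.mp hj
          have h2 : m + 1 - 1 - j = (m - 1 - j) + 1 := by omega
          rw [h2, pow_succ]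
          ring
        rw [h1, Finset.sum_neg_distrib]
        simp
        ring
      rw [hrw]
      constructor
      · simp only [Nat.add_sub_cancel]
        linarith
      · have : g m ≤ g (m - 1) := hg (m - 1) m (by omega)
        linarith

theorem evaluated_identity_ukdv (N' : ℕ) (hN' : 1 ≤ N') (p : Fin N' → ℝ)
    (L : ℝ) (hp0 : ∀ j, 0 ≤ p j) (hpmono : Monotone p) (hL : 0 ≤ L)
    (q : Fin N' → ℝ) (hq : ∀ j, q j = min (p j) L)
    (last : Fin N') (hlast : (last : ℕ) = N' - 1) :
    max (∑ j : Fin N', (-1 : ℝ) ^ (N' - 1 - (j : ℕ)) * (q j - p j)) (q last - L) = 0 ∧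
    (L ≤ p last →
      (∑ j : Fin N', (-1 : ℝ) ^ (N' - 1 - (j : ℕ)) * (q j - p j)) ≤ 0 ∧ q last - L = 0) ∧
    (p last < L →
      (∑ j : Fin N', (-1 : ℝ) ^ (N' - 1 - (j : ℕ)) * (q j - p j)) = 0 ∧ q last - L < 0) := by
  have hjle : ∀ j : Fin N', j ≤ last := by
    intro j
    have := j.isLt
    exact Fin.le_def.mpr (by omega)
  set P : ℕ → ℝ := fun j => if h : j < N' then p ⟨j, h⟩ else p last with hP
  have hPmono : ∀ i j : ℕ, i ≤ j → P i ≤ P j := by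
    intro i j hij
    simp only [hP]
    split <;> split
    · exact hpmono (Fin.le_def.mpr hij)
    · exact hpmono (hjle _)
    · next h1 h2 => omega
    · exact le_refl _
  set g : ℕ → ℝ := fun j => min (P j) L - P j with hg
  have hganti : ∀ i j : ℕ, i ≤ j → g j ≤ g i := by
    intro i j hij
    have := hPmono i j hij
    simp only [hg]
    rcases le_total (P j) L with h | h <;> rcases le_total (P i) L with h' | h' <;>
      simp [min_eq_left, min_eq_right, h, h'] <;> linarith
  have hgneg : ∀ j, g j ≤ 0 := by
    intro j
    simp only [hg]
    have := min_le_left (P j) L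
    linarith
  have hsum : (∑ j : Fin N', (-1 : ℝ) ^ (N' - 1 - (j : ℕ)) * (q j - p j))
      = ∑ j ∈ range N', (-1 : ℝ) ^ (N' - 1 - j) * g j := by
    rw [← Fin.sum_univ_eq_sum_range (fun j => (-1 : ℝ) ^ (N' - 1 - j) * g j) N']
    apply Finset.sum_congr rfl
    intro j _
    have hPj : P (j : ℕ) = p j := by simp [hP, j.isLt]
    simp [hg, hPj, hq j]
  have hSle : (∑ j : Fin N', (-1 : ℝ) ^ (N' - 1 - (j : ℕ)) * (q j - p j)) ≤ 0 := by
    rw [hsum]; exact (ukdv_aux g hganti hgneg N' hN').2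
  rcases le_or_gt L (p last) with hc | hc
  · have hql : q last - L = 0 := by
      rw [hq last, min_eq_right hc]; ring
    refine ⟨?_, fun _ => ⟨hSle, hql⟩, fun h => absurd hc (not_le.mpr h)⟩
    rw [hql]
    exact max_eq_right hSle
  · have hS0 : (∑ j : Fin N', (-1 : ℝ) ^ (N' - 1 - (j : ℕ)) * (q j - p j)) = 0 := by
      apply Finset.sum_eq_zero
      intro j _
      have : p j ≤ p last := hpmono (hjle j)
      rw [hq j, min_eq_left (by linarith)]
      ring
    have hql : q last - L < 0 := by
      rw [hq last, min_eq_left hc.le]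
      linarith
    refine ⟨?_, fun h => absurd hc (not_lt.mpr h), fun _ => ⟨hS0, hql⟩⟩
    rw [hS0]
    exact max_eq_left hql.le
end

section
/- Let N' ≥ 1, let p_1,...,p_{N'} be reals with 0 ≤ p_1 ≤ ... ≤ p_{N'}, let L ≥ 0, and define q_j = max(0, p_j − L). Then max( −Σ_{j=1}^{N'} (−1)^{N'−j}·q_j, p_{N'} − q_{N'} − L ) = 0. More precisely: if p_{N'} ≥ L then −Σ_{j=1}^{N'} (−1)^{N'−j}·q_j ≤ 0 and p_{N'} − q_{N'} − L = 0, while if p_{N'} < L then −Σ_{j=1}^{N'} (−1)^{N'−j}·q_j = 0 and p_{N'} − q_{N'} − L < 0. -/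
open Finset

lemma altsum_aux (f : ℕ → ℝ) (hf0 : ∀ i, 0 ≤ f i) (hmono : Monotone f) :
    ∀ n, 1 ≤ n → 0 ≤ (∑ j ∈ Finset.range n, (-1:ℝ)^(n-1-j) * f j) ∧
      (∑ j ∈ Finset.range n, (-1:ℝ)^(n-1-j) * f j) ≤ f (n-1) := by
  intro n
  induction n with
  | zero => intro h; omega
  | succ n ih =>
    intro _
    rcases Nat.eq_zero_or_pos n with h0 | hpos
    · subst h0
      simpa using hf0 0
    · obtain ⟨h1, h2⟩ := ih hpos
      have key : (∑ j ∈ Finset.range (n+1), (-1:ℝ)^(n+1-1-j) * f j)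
          = f n - ∑ j ∈ Finset.range n, (-1:ℝ)^(n-1-j) * f j := by
        rw [Finset.sum_range_succ]
        have hc : ∀ j ∈ Finset.range n,
            (-1:ℝ)^(n+1-1-j) * f j = -((-1:ℝ)^(n-1-j) * f j) := by
          intro j hj
          rw [Finset.mem_range] at hj
          have h3 : n + 1 - 1 - j = (n - 1 - j) + 1 := by omega
          rw [h3, pow_succ]; ring
        rw [Finset.sum_congr rfl hc, Finset.sum_neg_distrib]
        have h4 : n + 1 - 1 - n = 0 := by omega
        rw [h4]
        ring
      rw [key]
      have hle : f (n-1) ≤ f n := hmono (by omega)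
      constructor
      · linarith
      · simp only [Nat.add_sub_cancel]
        linarith

theorem evaluated_identity_utoda (N' : ℕ) (hN' : 1 ≤ N') (p : Fin N' → ℝ)
    (L : ℝ) (hp0 : ∀ j, 0 ≤ p j) (hpmono : Monotone p) (hL : 0 ≤ L)
    (q : Fin N' → ℝ) (hq : ∀ j, q j = max 0 (p j - L))
    (last : Fin N') (hlast : (last : ℕ) = N' - 1) :
    max (-∑ j : Fin N', (-1 : ℝ) ^ (N' - 1 - (j : ℕ)) * q j) (p last - q last - L) = 0 ∧
    (L ≤ p last →
      (-∑ j : Fin N', (-1 : ℝ) ^ (N' - 1 - (j : ℕ)) * q j) ≤ 0 ∧ p last - q last - L = 0) ∧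
    (p last < L →
      (-∑ j : Fin N', (-1 : ℝ) ^ (N' - 1 - (j : ℕ)) * q j) = 0 ∧ p last - q last - L < 0) := by
  set S : ℝ := ∑ j : Fin N', (-1 : ℝ) ^ (N' - 1 - (j : ℕ)) * q j with hS
  have hq0 : ∀ j, 0 ≤ q j := fun j => by rw [hq j]; exact le_max_left _ _
  have hqmono : Monotone q := by
    intro i j hij
    rw [hq i, hq j]
    exact max_le_max le_rfl (by linarith [hpmono hij])
  -- extend q to ℕ
  set f : ℕ → ℝ := fun j => q ⟨min j (N' - 1), by omega⟩ with hf
  have hf0 : ∀ i, 0 ≤ f i := fun i => hq0 _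
  have hfmono : Monotone f := by
    intro i j hij
    exact hqmono (by simp [Fin.le_def]; omega)
  have hfeq : ∀ j : Fin N', f (j : ℕ) = q j := by
    intro j
    have : min (j : ℕ) (N' - 1) = (j : ℕ) := by omega
    simp only [hf, this]
  have hSeq : S = ∑ j ∈ Finset.range N', (-1:ℝ)^(N'-1-j) * f j := by
    rw [hS, ← Fin.sum_univ_eq_sum_range (fun k => (-1:ℝ)^(N'-1-k) * f k) N']
    exact Finset.sum_congr rfl (fun j _ => by rw [hfeq j])
  obtain ⟨hS0, hSle⟩ := altsum_aux f hf0 hfmono N' hN'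
  rw [← hSeq] at hS0 hSle
  have hflast : f (N' - 1) = q last := by
    rw [← hfeq last, hlast]
  rw [hflast] at hSle
  have hkey1 : L ≤ p last → q last = p last - L := by
    intro h; rw [hq last]; exact max_eq_right (by linarith)
  have hkey2 : p last < L → ∀ j, q j = 0 := by
    intro h j
    have hjle : p j ≤ p last := hpmono (by
      have := j.isLt
      rw [Fin.le_def, hlast]; omega)
    rw [hq j]; exact max_eq_left (by linarith)
  refine ⟨?_, ?_, ?_⟩
  · rcases le_or_gt L (p last) with h | h
    · have := hkey1 h
      have : p last - q last - L = 0 := by rw [this]; ring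
      rw [this]
      exact max_eq_right (by linarith)
    · have hSz : S = 0 := by
        rw [hS]
        exact Finset.sum_eq_zero (fun j _ => by rw [hkey2 h j]; ring)
      rw [hSz, neg_zero]
      have : q last = 0 := hkey2 h last
      exact max_eq_left (by rw [this]; linarith)
  · intro h
    have := hkey1 h
    exact ⟨by linarith, by rw [this]; ring⟩
  · intro h
    have hSz : S = 0 := by
      rw [hS]
      exact Finset.sum_eq_zero (fun j _ => by rw [hkey2 h j]; ring)
    have : q last = 0 := hkey2 h last
    exact ⟨by rw [hSz]; ring, by rw [this]; linarith⟩
end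

section
/- Let N ≥ 1, let r_1,...,r_{N+1} be reals with 0 ≤ r_1 ≤ ... ≤ r_{N+1}, and let s_1,...,s_{N+1} be arbitrary reals. Then the ultradiscrete permanent of the (N+1)×(N+1) matrix whose (j,m) entry (m = 1,...,N+1) is |s_j + (−N−3+2m)·r_j/2| equals [max over (ρ_1,...,ρ_{N+1}) ∈ {−1,1}^{N+1} of ( Σ_{j=1}^{N+1} ρ_j·(s_j − r_j/2) − (1/2)·Σ_{1≤j<j'≤N+1} ρ_j·ρ_{j'}·r_j )] + (1/2)·Σ_{1≤j<j'≤N+1} r_{j'}. -/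
open Finset

section UpermAux

lemma sym_split {M : ℕ} (g : Fin M → Fin M → ℝ) :
    ∑ j, ∑ k, g j k
      = (∑ j, ∑ k, if j < k then g j k + g k j else 0) + ∑ j, g j j := by
  have h : ∀ j k : Fin M, g j k =
      (if j < k then g j k else 0) + (if k < j then g j k else 0) +
        (if j = k then g j k else 0) := by
    intro j k
    rcases lt_trichotomy j k with h | h | h
    · simp [h, h.ne, not_lt.2 h.le]
    · simp [h]
    · simp [h, h.ne', not_lt.2 h.le]
  calc ∑ j, ∑ k, g j k
      = ∑ j, ∑ k, ((if j < k then g j k else 0) + (if k < j then g j k else 0) +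
          (if j = k then g j k else 0)) := by
        refine Finset.sum_congr rfl fun j _ => Finset.sum_congr rfl fun k _ => h j k
    _ = (∑ j, ∑ k, if j < k then g j k else 0) + (∑ j, ∑ k, if k < j then g j k else 0)
          + (∑ j, ∑ k, if j = k then g j k else 0) := by
        simp [Finset.sum_add_distrib]
    _ = (∑ j, ∑ k, if j < k then g j k else 0) + (∑ j, ∑ k, if j < k then g k j else 0)
          + ∑ j, g j j := by
        have h2 : (∑ j, ∑ k, if k < j then g j k else 0)
            = ∑ j : Fin M, ∑ k : Fin M, if j < k then g k j else 0 := Finset.sum_comm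
        have h3 : (∑ j : Fin M, ∑ k, if j = k then g j k else 0) = ∑ j, g j j :=
          Finset.sum_congr rfl fun j _ => by simp
        rw [h2, h3]
    _ = (∑ j, ∑ k, if j < k then g j k + g k j else 0) + ∑ j, g j j := by
        congr 1
        rw [← Finset.sum_add_distrib]
        refine Finset.sum_congr rfl fun j _ => ?_
        rw [← Finset.sum_add_distrib]
        refine Finset.sum_congr rfl fun k _ => ?_
        split <;> simp

lemma coord_sum {M : ℕ} (a : Fin M) :
    ((a : ℕ) : ℝ) = ∑ k : Fin M, if k < a then (1 : ℝ) else 0 := by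
  rw [Finset.sum_boole]
  norm_num
  rw [show (filter (fun x => x < a) univ) = Finset.Iio a by ext k; simp, Fin.card_Iio]

lemma rank_sum {M : ℕ} (v : Fin M → ℝ) (π : Equiv.Perm (Fin M)) (j : Fin M) :
    ((π j : ℕ) : ℝ) * v j = ∑ k : Fin M, if π k < π j then v j else 0 := by
  have h1 : ((π j : ℕ) : ℝ) = ∑ k : Fin M, if π k < π j then (1 : ℝ) else 0 := by
    rw [coord_sum (π j)]
    exact (Fintype.sum_equiv π _ _ fun k => rfl).symm
  rw [h1, Finset.sum_mul]
  exact Finset.sum_congr rfl fun k _ => by split <;> simp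

lemma upper_bound {M : ℕ} (v : Fin M → ℝ) (π : Equiv.Perm (Fin M)) :
    ∑ j, ((π j : ℕ) : ℝ) * v j ≤ ∑ j, ∑ k, if j < k then max (v j) (v k) else 0 := by
  calc ∑ j, ((π j : ℕ) : ℝ) * v j
      = ∑ j, ∑ k, if π k < π j then v j else 0 :=
        Finset.sum_congr rfl fun j _ => rank_sum v π j
    _ = (∑ j, ∑ k, if j < k then
          (if π k < π j then v j else 0) + (if π j < π k then v k else 0) else 0)
          + ∑ j, (if π j < π j then v j else 0) :=
        sym_split (fun j k => if π k < π j then v j else 0)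
    _ ≤ ∑ j, ∑ k, if j < k then max (v j) (v k) else 0 := by
        have hd : ∑ j : Fin M, (if π j < π j then v j else 0) = 0 := by simp
        rw [hd, add_zero]
        refine Finset.sum_le_sum fun j _ => Finset.sum_le_sum fun k _ => ?_
        by_cases hjk : j < k
        · simp only [hjk, if_pos]
          rcases (π.injective.ne hjk.ne).lt_or_gt with h | h
          · simp [h, not_lt.2 h.le, le_max_left]
          · simp [h, not_lt.2 h.le, le_max_right]
        · simp [hjk]

lemma double_max_halve {M : ℕ} (x : Fin M → ℝ) :
    2 * (∑ j, ∑ k, if j < k then max (x j) (x k) else 0)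
      = (∑ j, ∑ k, max (x j) (x k)) - ∑ j, x j := by
  have h := sym_split (fun j k => max (x j) (x k))
  have h1 : (∑ j : Fin M, ∑ k, if j < k then max (x j) (x k) + max (x k) (x j) else 0)
      = 2 * ∑ j : Fin M, ∑ k, if j < k then max (x j) (x k) else 0 := by
    rw [Finset.mul_sum]
    refine Finset.sum_congr rfl fun j _ => ?_
    rw [Finset.mul_sum]
    refine Finset.sum_congr rfl fun k _ => ?_
    split
    · rw [max_comm (x k) (x j)]; ring
    · ring
  have h2 : (∑ j : Fin M, max (x j) (x j)) = ∑ j, x j := by simp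
  rw [h1, h2] at h
  linarith

lemma exists_sorting_perm {M : ℕ} (v : Fin M → ℝ) :
    ∃ π : Equiv.Perm (Fin M), ∑ j, ((π j : ℕ) : ℝ) * v j
      = ∑ j, ∑ k, if j < k then max (v j) (v k) else 0 := by
  set σ := Tuple.sort v with hσ
  have hw : Monotone (v ∘ σ) := Tuple.monotone_sort v
  refine ⟨σ⁻¹, ?_⟩
  have step1 : ∑ j, ((σ⁻¹ j : ℕ) : ℝ) * v j = ∑ i : Fin M, ((i : ℕ) : ℝ) * v (σ i) :=
    (Fintype.sum_equiv σ _ _ fun i => by simp).symm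
  have step2 : ∑ i : Fin M, ((i : ℕ) : ℝ) * v (σ i)
      = ∑ i : Fin M, ∑ k : Fin M, if k < i then v (σ i) else 0 := by
    refine Finset.sum_congr rfl fun i _ => ?_
    rw [coord_sum i, Finset.sum_mul]
    exact Finset.sum_congr rfl fun k _ => by split <;> simp
  have step3 : (∑ i : Fin M, ∑ k : Fin M, if k < i then v (σ i) else 0)
      = ∑ j : Fin M, ∑ k : Fin M, if j < k then max (v (σ j)) (v (σ k)) else 0 := by
    rw [Finset.sum_comm]
    refine Finset.sum_congr rfl fun j _ => Finset.sum_congr rfl fun k _ => ?_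
    split
    · next h => rw [max_eq_right (show v (σ j) ≤ v (σ k) from hw h.le)]
    · rfl
  have step4 : (∑ j : Fin M, ∑ k : Fin M, if j < k then max (v (σ j)) (v (σ k)) else 0)
      = ∑ j, ∑ k, if j < k then max (v j) (v k) else 0 := by
    have hfull : (∑ j : Fin M, ∑ k : Fin M, max (v (σ j)) (v (σ k)))
        = ∑ j : Fin M, ∑ k : Fin M, max (v j) (v k) := by
      refine Fintype.sum_equiv σ _ _ fun j => ?_
      exact Fintype.sum_equiv σ _ _ fun k => rfl
    have hsum : (∑ j, v (σ j)) = ∑ j, v j := Fintype.sum_equiv σ _ _ fun j => rfl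
    have h1 := double_max_halve (fun j => v (σ j))
    have h2 := double_max_halve v
    rw [hfull, hsum] at h1
    linarith
  rw [step1, step2, step3, step4]

lemma pair_max (a b x y : ℝ) (ha : a = 1 ∨ a = -1) (hb : b = 1 ∨ b = -1)
    (hx : 0 ≤ x) (hxy : x ≤ y) :
    max (a * x) (b * y) = (a * x + b * y) / 2 + (y - a * b * x) / 2 := by
  rcases ha with h | h <;> rcases hb with h' | h' <;> subst h h'
  · rw [max_eq_right (by linarith : (1:ℝ) * x ≤ 1 * y)]; ring
  · rw [max_eq_left (by linarith : (-1:ℝ) * y ≤ 1 * x)]; ring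
  · rw [max_eq_right (by linarith : (-1:ℝ) * x ≤ 1 * y)]; ring
  · rw [max_eq_left (by linarith : (-1:ℝ) * y ≤ -1 * x)]; ring

lemma split_ite_add {M : ℕ} (f g : Fin M → Fin M → ℝ) :
    (∑ j, ∑ k, if j < k then f j k + g j k else 0)
      = (∑ j, ∑ k, if j < k then f j k else 0) + ∑ j, ∑ k, (if j < k then g j k else 0) := by
  rw [← Finset.sum_add_distrib]
  refine Finset.sum_congr rfl fun j _ => ?_
  rw [← Finset.sum_add_distrib]
  exact Finset.sum_congr rfl fun k _ => by split <;> simp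

lemma split_ite_smul {M : ℕ} (c : ℝ) (f : Fin M → Fin M → ℝ) :
    (∑ j, ∑ k, if j < k then c * f j k else 0)
      = c * ∑ j, ∑ k, (if j < k then f j k else 0) := by
  rw [Finset.mul_sum]
  refine Finset.sum_congr rfl fun j _ => ?_
  rw [Finset.mul_sum]
  exact Finset.sum_congr rfl fun k _ => by split <;> simp

lemma pairs_sum {M : ℕ} (v : Fin M → ℝ) :
    (∑ j, ∑ k, if j < k then v j + v k else 0) = ((M : ℝ) - 1) * ∑ j, v j := by
  have h := sym_split (fun j k : Fin M => v j)
  have h1 : (∑ j : Fin M, ∑ _k : Fin M, v j) = (M : ℝ) * ∑ j, v j := by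
    simp [Finset.mul_sum, mul_comm]
    exact (Finset.sum_mul _ _ _).symm
  rw [h1] at h
  have h3 : (∑ j : Fin M, ∑ k : Fin M, if j < k then v j + v k else 0)
      = (M : ℝ) * ∑ j, v j - ∑ j, v j := by linarith
  rw [h3]; ring

lemma rearr {M : ℕ} (e r : Fin M → ℝ) (he : ∀ j, e j = 1 ∨ e j = -1)
    (hr0 : ∀ j, 0 ≤ r j) (hm : Monotone r) :
    (∑ j, ∑ k, if j < k then max (e j * r j) (e k * r k) else 0)
      = ((M : ℝ) - 1) / 2 * ∑ j, e j * r j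
        - (1 / 2) * (∑ j, ∑ k, if j < k then e j * e k * r j else 0)
        + (1 / 2) * ∑ j, ∑ k, (if j < k then r k else 0) := by
  have step : (∑ j, ∑ k, if j < k then max (e j * r j) (e k * r k) else 0)
      = ∑ j, ∑ k, if j < k then
          (1/2) * (e j * r j + e k * r k) + ((1/2) * r k + -(1/2) * (e j * e k * r j)) else 0 := by
    refine Finset.sum_congr rfl fun j _ => Finset.sum_congr rfl fun k _ => ?_
    split
    · next hjk =>
        rw [pair_max (e j) (e k) (r j) (r k) (he j) (he k) (hr0 j) (hm hjk.le)]
        ring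
    · rfl
  rw [step, split_ite_add, split_ite_add, split_ite_smul, split_ite_smul, split_ite_smul,
    pairs_sum (fun j => e j * r j)]
  ring

end UpermAux

theorem uperm_formula_Nplus1 (N : ℕ) (hN : 1 ≤ N) (r s : Fin (N + 1) → ℝ)
    (hr0 : ∀ j, 0 ≤ r j) (hrmono : Monotone r) :
    uperm (N + 1) (fun j m => |s j + (2 * ((m : ℕ) : ℝ) - (N : ℝ) - 1) * r j / 2|) =
      (Finset.univ.sup' Finset.univ_nonempty fun ρ : Fin (N + 1) → Bool =>
        (∑ j, (if ρ j then (1 : ℝ) else -1) * (s j - r j / 2)) -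
          (1 / 2) * ∑ j, ∑ j', if j < j' then
            (if ρ j then (1 : ℝ) else -1) * (if ρ j' then (1 : ℝ) else -1) * r j else 0) +
      (1 / 2) * ∑ j : Fin (N + 1), ∑ j' : Fin (N + 1), (if j < j' then r j' else 0) := by
  set E : (Fin (N + 1) → Bool) → Fin (N + 1) → ℝ :=
    fun ρ j => if ρ j then (1 : ℝ) else -1 with hE
  have he : ∀ ρ j, E ρ j = 1 ∨ E ρ j = -1 := by
    intro ρ j; by_cases h : ρ j <;> simp [hE, h]
  -- the body of the ρ-sup
  set G : (Fin (N + 1) → Bool) → ℝ := fun ρ =>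
    (∑ j, E ρ j * (s j - r j / 2)) -
      (1 / 2) * ∑ j, ∑ j', if j < j' then E ρ j * E ρ j' * r j else 0 with hG
  set C : ℝ := (1 / 2) * ∑ j : Fin (N + 1), ∑ j' : Fin (N + 1), (if j < j' then r j' else 0)
    with hC
  have hentry : ∀ (ρ : Fin (N + 1) → Bool) (π : Equiv.Perm (Fin (N + 1))),
      (∑ j, E ρ j * (s j + (2 * ((π j : ℕ) : ℝ) - (N : ℝ) - 1) * r j / 2))
        = (∑ j, E ρ j * s j)
          + (∑ j, ((π j : ℕ) : ℝ) * (E ρ j * r j))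
          - ((N : ℝ) + 1) / 2 * ∑ j, E ρ j * r j := by
    intro ρ π
    rw [Finset.mul_sum, ← Finset.sum_add_distrib, ← Finset.sum_sub_distrib]
    exact Finset.sum_congr rfl fun j _ => by ring
  have hsub : ∀ ρ, (∑ j, E ρ j * (s j - r j / 2))
      = (∑ j, E ρ j * s j) - (1 / 2) * ∑ j, E ρ j * r j := by
    intro ρ
    rw [Finset.mul_sum, ← Finset.sum_sub_distrib]
    exact Finset.sum_congr rfl fun j _ => by ring
  have hcomb : ∀ ρ : Fin (N + 1) → Bool,
      (∑ j, E ρ j * s j)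
        + (∑ j, ∑ k, if j < k then max (E ρ j * r j) (E ρ k * r k) else 0)
        - ((N : ℝ) + 1) / 2 * ∑ j, E ρ j * r j = G ρ + C := by
    intro ρ
    rw [rearr (E ρ) r (he ρ) hr0 hrmono]
    simp only [hG, hC]
    rw [hsub ρ]
    push_cast
    ring
  rw [uperm]
  apply le_antisymm
  · apply Finset.sup'_le
    intro π _
    set ρ : Fin (N + 1) → Bool :=
      fun j => decide (0 ≤ s j + (2 * ((π j : ℕ) : ℝ) - (N : ℝ) - 1) * r j / 2) with hρ
    have h1 : (∑ j, |s j + (2 * ((π j : ℕ) : ℝ) - (N : ℝ) - 1) * r j / 2|)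
        = ∑ j, E ρ j * (s j + (2 * ((π j : ℕ) : ℝ) - (N : ℝ) - 1) * r j / 2) := by
      refine Finset.sum_congr rfl fun j _ => ?_
      by_cases h : 0 ≤ s j + (2 * ((π j : ℕ) : ℝ) - (N : ℝ) - 1) * r j / 2
      · simp [hE, hρ, h, abs_of_nonneg h]
      · have hd : decide (0 ≤ s j + (2 * ((π j : ℕ) : ℝ) - (N : ℝ) - 1) * r j / 2) = false :=
          decide_eq_false h
        simp only [hE, hρ, hd, Bool.false_eq_true, if_false]
        rw [abs_of_neg (not_le.1 h)]; ring
    have h2 := upper_bound (fun j => E ρ j * r j) π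
    have h3 := hcomb ρ
    have h4 : G ρ ≤ Finset.univ.sup' Finset.univ_nonempty G := Finset.le_sup' G (mem_univ ρ)
    have h5 := hentry ρ π
    rw [h1, h5]
    have hstep : (∑ j, E ρ j * s j) + (∑ j, ((π j : ℕ) : ℝ) * (E ρ j * r j))
        - ((N : ℝ) + 1) / 2 * ∑ j, E ρ j * r j ≤ G ρ + C := by
      rw [← h3]
      have := h2
      linarith
    have h4' : G ρ + C ≤ Finset.univ.sup' Finset.univ_nonempty G + C := by linarith
    exact le_trans hstep h4'
  · rw [← le_sub_iff_add_le]
    apply Finset.sup'_le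
    intro ρ _
    rw [le_sub_iff_add_le]
    obtain ⟨π, hπ⟩ := exists_sorting_perm (fun j => E ρ j * r j)
    have h5 : (∑ j, |s j + (2 * ((π j : ℕ) : ℝ) - (N : ℝ) - 1) * r j / 2|)
        ≤ Finset.univ.sup' Finset.univ_nonempty
          (fun π : Equiv.Perm (Fin (N + 1)) =>
            ∑ j, |s j + (2 * ((π j : ℕ) : ℝ) - (N : ℝ) - 1) * r j / 2|) :=
      Finset.le_sup' (fun π : Equiv.Perm (Fin (N + 1)) =>
        ∑ j, |s j + (2 * ((π j : ℕ) : ℝ) - (N : ℝ) - 1) * r j / 2|) (mem_univ π)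
    have h6 : (∑ j, E ρ j * (s j + (2 * ((π j : ℕ) : ℝ) - (N : ℝ) - 1) * r j / 2))
        ≤ ∑ j, |s j + (2 * ((π j : ℕ) : ℝ) - (N : ℝ) - 1) * r j / 2| := by
      refine Finset.sum_le_sum fun j _ => ?_
      rcases he ρ j with h | h <;> rw [h]
      · rw [one_mul]; exact le_abs_self _
      · rw [neg_one_mul]; exact neg_le_abs _
    have h7 := hentry ρ π
    have h8 := hcomb ρ
    linarith [hπ]
end

section
/- Let N ≥ 1 and let p_1,...,p_{N+1} be reals with 0 ≤ p_1 ≤ ... ≤ p_{N+1}. Define q_j = min(p_j, 1), r_j = 2·p_j, s_j(n,i) = p_j·n − q_j·i + c_j for arbitrary reals c_j. Let f̃^n_i be the ultradiscrete permanent of the N×N matrix whose (j,m) entry (m = 1,...,N) is |s_j(n + 2(m−1), i)|, and let g̃^n_i be the ultradiscrete permanent of the (N+1)×(N+1) matrix whose (j,m) entry (m = 1,...,N+1) is |s_j(n + 2(m−2), i)|. If p_{N+1} ≤ 1, then for all real n, i: f̃^{n+1}_{i−1} + g̃^n_i − p_{N+1} + q_{N+1} − 2 ≤ f̃^{n+1}_{i−1}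 + g̃^n_i − p_{N+1} − q_{N+1} ≤ f̃^{n−1}_{i−1} + g̃^{n+2}_i − p_{N+1} + q_{N+1}. -/
open Finset

lemma le_uperm (M : ℕ) (a : Fin M → Fin M → ℝ) (π : Equiv.Perm (Fin M)) :
    ∑ j, a j (π j) ≤ uperm M a :=
  Finset.le_sup' (fun π : Equiv.Perm (Fin M) => ∑ j, a j (π j)) (mem_univ π)

lemma exists_uperm (M : ℕ) (a : Fin M → Fin M → ℝ) :
    ∃ π : Equiv.Perm (Fin M), uperm M a = ∑ j, a j (π j) := by
  obtain ⟨π, -, h⟩ := Finset.exists_mem_eq_sup' (Finset.univ_nonempty)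
    (fun π : Equiv.Perm (Fin M) => ∑ j, a j (π j))
  exact ⟨π, h⟩


lemma key (N : ℕ) (hN : 1 ≤ N) (w : Fin (N + 1) → ℤ → ℝ) (ε : ℝ)
    (hw : ∀ j, w j (-1) ≤ w j 0 + ε)
    (π : Equiv.Perm (Fin N)) (σ : Equiv.Perm (Fin (N + 1))) :
    ∃ (π' : Equiv.Perm (Fin N)) (σ' : Equiv.Perm (Fin (N + 1))),
      (∑ j, w j.castSucc (((π j : ℕ) : ℤ) + 1)) + ∑ j, w j (((σ j : ℕ) : ℤ) - 1) ≤
      ((∑ j, w j.castSucc ((π' j : ℕ) : ℤ)) + ∑ j, w j ((σ' j : ℕ) : ℤ)) + ε := by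
  classical
  -- basic objects
  set ph : Fin (N + 1) → Fin (N + 1) :=
    fun j => if h : (j : ℕ) < N then Fin.succ (π ⟨j, h⟩) else 0 with hphdef
  have ph_last : ph (Fin.last N) = 0 := by
    simp only [ph]
    rw [dif_neg (by simp)]
  have ph_cast : ∀ (j : Fin (N+1)) (h : (j:ℕ) < N), (ph j : ℕ) = (π ⟨j, h⟩ : ℕ) + 1 := by
    intro j h
    simp only [ph]
    rw [dif_pos h]
    rfl
  have ph_inj : Function.Injective ph := by
    intro a b hab
    simp only [ph] at hab
    split_ifs at hab with ha hb hb
    · have h1 : (⟨(a:ℕ), ha⟩ : Fin N) = ⟨(b:ℕ), hb⟩ := π.injective (Fin.succ_injective _ hab)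
      have := congrArg Fin.val h1
      exact Fin.ext this
    · exact absurd hab (Fin.succ_ne_zero _)
    · exact absurd hab.symm (Fin.succ_ne_zero _)
    · have := a.isLt; have := b.isLt; apply Fin.ext; omega
  have ph_bij : Function.Bijective ph := Finite.injective_iff_bijective.mp ph_inj
  set phE : Equiv.Perm (Fin (N+1)) := Equiv.ofBijective ph ph_bij with hphE
  have phE_apply : ∀ x, phE x = ph x := fun x => rfl
  set D : Fin (N + 1) → Fin (N + 1) :=
    fun j => if h : 1 ≤ (σ j : ℕ) then ⟨(σ j : ℕ) - 1, by have := (σ j).isLt; omega⟩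
             else Fin.last N with hDdef
  have Dval : ∀ j, 1 ≤ (σ j : ℕ) → (D j : ℕ) = (σ j : ℕ) - 1 := by
    intro j h; simp only [D]; rw [dif_pos h]
  have Dval0 : ∀ j, (σ j : ℕ) = 0 → D j = Fin.last N := by
    intro j h; simp only [D]; rw [dif_neg (by omega)]
  have D_inj : Function.Injective D := by
    intro a b hab
    simp only [D] at hab
    split_ifs at hab with ha hb hb
    · have := congrArg Fin.val hab
      simp only at this
      exact σ.injective (Fin.ext (by omega))
    · have := congrArg Fin.val hab; simp only [Fin.val_last] at this
      have := (σ a).isLt; omega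
    · have := congrArg Fin.val hab; simp only [Fin.val_last] at this
      have := (σ b).isLt; omega
    · exact σ.injective (Fin.ext (by omega))
  set j₀ : Fin (N+1) := σ.symm 0 with hj₀def
  have hσj₀ : σ j₀ = 0 := σ.apply_symm_apply 0
  have hj₀iff : ∀ j, σ j = 0 ↔ j = j₀ := by
    intro j; constructor
    · intro h; rw [← hσj₀] at h; exact σ.injective h
    · rintro rfl; exact hσj₀
  set ψ : Fin (N+1) → Fin (N+1) := fun t => phE.symm (D t) with hψdef
  have ψ_inj : Function.Injective ψ := phE.symm.injective.comp D_inj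
  set t : ℕ → Fin (N+1) := fun m => ψ^[m] j₀ with htdef
  have ht0 : t 0 = j₀ := rfl
  have htsucc : ∀ m, t (m+1) = ψ (t m) := by
    intro m; simp only [t]; rw [Function.iterate_succ_apply']
  have hA : ∀ m, ph (t (m+1)) = D (t m) := by
    intro m
    rw [htsucc m]
    exact phE.apply_symm_apply (D (t m))
  -- existence of k
  have hex : ∃ m, 0 < m ∧ (σ (t m) : ℕ) ≤ 1 := by
    set DE : Equiv.Perm (Fin (N+1)) :=
      Equiv.ofBijective D (Finite.injective_iff_bijective.mp D_inj) with hDE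
    set ψE : Equiv.Perm (Fin (N+1)) := DE.trans phE.symm with hψE
    have hψEa : ∀ x, ψE x = ψ x := fun x => rfl
    have hiter : ∀ m x, ψ^[m] x = (ψE ^ m) x := by
      intro m
      induction m with
      | zero => intro x; simp
      | succ n ih =>
        intro x
        rw [Function.iterate_succ_apply, pow_succ, Equiv.Perm.mul_apply, ← hψEa x, ← ih (ψE x)]
    refine ⟨orderOf ψE, orderOf_pos ψE, ?_⟩
    have h1 : t (orderOf ψE) = j₀ := by
      show ψ^[orderOf ψE] j₀ = j₀
      rw [hiter, pow_orderOf_eq_one]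
      rfl
    rw [h1, hσj₀]
    simp
  set k := Nat.find hex with hkdef
  have hk0 : 0 < k := (Nat.find_spec hex).1
  have hσtk : (σ (t k) : ℕ) ≤ 1 := (Nat.find_spec hex).2
  have hmin : ∀ m, 0 < m → m < k → 2 ≤ (σ (t m) : ℕ) := by
    intro m h1 h2
    have := Nat.find_min hex h2
    omega
  have hlast_ne : (Fin.last N) ≠ (0 : Fin (N+1)) := by
    intro h; have := congrArg Fin.val h; simp at this; omega
  have hDj₀ : D j₀ = Fin.last N := Dval0 _ (by rw [hσj₀]; rfl)
  have D_eq_zero : ∀ j, D j = 0 → (σ j : ℕ) = 1 := by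
    intro j h
    by_cases hc : 1 ≤ (σ j : ℕ)
    · have h1 := Dval j hc
      rw [h] at h1
      simp only [Fin.val_zero] at h1
      omega
    · exfalso
      have := Dval0 j (by omega)
      rw [h] at this
      exact hlast_ne this.symm
  -- chain avoids last
  have htne : ∀ m, 1 ≤ m → m ≤ k → t m ≠ Fin.last N := by
    intro m h1 h2 hcon
    obtain ⟨m', rfl⟩ : ∃ m', m = m' + 1 := ⟨m - 1, by omega⟩
    have hA' := hA m'
    rw [hcon, ph_last] at hA'
    have h3 : (σ (t m') : ℕ) = 1 := D_eq_zero _ hA'.symm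
    rcases Nat.eq_zero_or_pos m' with rfl | hm'
    · rw [ht0, hσj₀] at h3; simp at h3
    · have := hmin m' hm' (by omega); omega
  -- chain distinctness versus j₀
  have htj₀ : ∀ m, 1 ≤ m → m < k → t m ≠ j₀ := by
    intro m h1 h2 hcon
    have := hmin m h1 h2
    rw [hcon, hσj₀] at this
    simp at this
  set C : Finset (Fin (N+1)) := (Finset.Icc 1 k).image t with hCdef
  have hmemC : ∀ j, j ∈ C ↔ ∃ m, 1 ≤ m ∧ m ≤ k ∧ t m = j := by
    intro j
    simp only [C, Finset.mem_image, Finset.mem_Icc]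
    constructor
    · rintro ⟨m, ⟨h1, h2⟩, h3⟩; exact ⟨m, h1, h2, h3⟩
    · rintro ⟨m, h1, h2, h3⟩; exact ⟨m, ⟨h1, h2⟩, h3⟩
  have htkC : t k ∈ C := (hmemC _).mpr ⟨k, hk0, le_refl _, rfl⟩
  have hCne_last : ∀ j ∈ C, j ≠ Fin.last N := by
    intro j hj
    obtain ⟨m, h1, h2, rfl⟩ := (hmemC j).mp hj
    exact htne m h1 h2
  have hj₀C : j₀ ∈ C → t k = j₀ := by
    intro h
    obtain ⟨m, h1, h2, h3⟩ := (hmemC j₀).mp h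
    rcases eq_or_lt_of_le h2 with rfl | hlt
    · exact h3
    · exact absurd h3 (htj₀ m h1 hlt)
  -- chain distinctness
  have htinj : ∀ a b, 1 ≤ a → a < b → b ≤ k → t a ≠ t b := by
    intro a b h1 hab hbk hcon
    have hd : ψ^[a] (ψ^[b - a] j₀) = ψ^[a] j₀ := by
      rw [← Function.iterate_add_apply]
      rw [show a + (b - a) = b by omega]
      exact hcon.symm
    have h2 : ψ^[b - a] j₀ = j₀ := (ψ_inj.iterate a) hd
    have h3 : (σ (t (b - a)) : ℕ) ≤ 1 := by
      rw [show t (b - a) = j₀ from h2, hσj₀]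
      simp
    exact Nat.find_min hex (show b - a < k by omega) ⟨by omega, h3⟩
  -- value lemmas
  have ph_eq_last : ∀ j, ph j = Fin.last N → j = t 1 := by
    intro j h
    apply ph_inj
    rw [h]
    have := hA 0
    rw [ht0, hDj₀] at this
    exact this.symm
  have ph_eq_zero : ∀ j, ph j = 0 → j = Fin.last N := by
    intro j h; exact ph_inj (h.trans ph_last.symm)
  have D_eq_last : ∀ j, D j = Fin.last N → j = j₀ := by
    intro j h
    by_cases hc : 1 ≤ (σ j : ℕ)
    · exfalso
      have h1 := Dval j hc
      rw [h] at h1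
      simp only [Fin.val_last] at h1
      have := (σ j).isLt; omega
    · have h0 : (σ j : ℕ) = 0 := by omega
      exact (hj₀iff j).mp (Fin.ext (by simp [h0]))
  have htk_ne_last : t k ≠ Fin.last N := htne k hk0 (le_refl _)
  -- σ' function
  set sf : Fin (N+1) → Fin (N+1) :=
    fun j => if j ∈ C then ph j else if j = j₀ then 0 else D j with hsfdef
  have hj₀val : (σ j₀ : ℕ) = 0 := by rw [hσj₀]; rfl
  have hne_of_val : ∀ x : Fin (N+1), (σ x : ℕ) ≠ 0 → x ≠ j₀ := by
    intro x hx hc; rw [hc] at hx; exact hx hj₀val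
  have hval_of_ne : ∀ x : Fin (N+1), x ≠ j₀ → 1 ≤ (σ x : ℕ) := by
    intro x hx
    by_contra hc
    exact hx ((hj₀iff x).mp (Fin.ext (by simp; omega)))
  have aux_cross : ∀ x y, x ∈ C → y ∉ C → y ≠ j₀ → ph x ≠ D y := by
    intro x y hxC hyC hyj hab
    obtain ⟨m, hm1, hm2, rfl⟩ := (hmemC x).mp hxC
    obtain ⟨m', rfl⟩ : ∃ m', m = m' + 1 := ⟨m - 1, by omega⟩
    rw [hA m'] at hab
    have hb : y = t m' := D_inj hab.symm
    rcases Nat.eq_zero_or_pos m' with rfl | hm'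
    · exact hyj (hb.trans ht0)
    · exact hyC ((hmemC y).mpr ⟨m', hm', by omega, hb.symm⟩)
  have htk_eq_j₀_of : j₀ ∉ C → (σ (t k) : ℕ) = 1 := by
    intro hj₀notC
    have htkj : t k ≠ j₀ := fun hc => hj₀notC (hc ▸ htkC)
    have h2 := hval_of_ne _ htkj
    omega
  have aux_zero_cross : ∀ y, y ∉ C → y ≠ j₀ → j₀ ∉ C → D y ≠ 0 := by
    intro y hyC hyj hj₀notC hab
    have h1 : (σ y : ℕ) = 1 := D_eq_zero y hab
    have h3 := htk_eq_j₀_of hj₀notC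
    have : y = t k := σ.injective (Fin.ext (by omega))
    exact hyC (this ▸ htkC)
  have sf_inj : Function.Injective sf := by
    have main : ∀ a b, a ∈ C → b ∉ C → sf a ≠ sf b := by
      intro a b haC hbC hab
      simp only [sf, if_pos haC, if_neg hbC] at hab
      by_cases hbj : b = j₀
      · rw [if_pos hbj] at hab
        exact hCne_last a haC (ph_eq_zero a hab)
      · rw [if_neg hbj] at hab
        exact aux_cross a b haC hbC hbj hab
    intro a b hab
    by_cases haC : a ∈ C <;> by_cases hbC : b ∈ C
    · simp only [sf, if_pos haC, if_pos hbC] at hab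
      exact ph_inj hab
    · exact absurd hab (main a b haC hbC)
    · exact absurd hab.symm (main b a hbC haC)
    · simp only [sf, if_neg haC, if_neg hbC] at hab
      by_cases haj : a = j₀ <;> by_cases hbj : b = j₀
      · rw [haj, hbj]
      · exfalso
        rw [if_pos haj, if_neg hbj] at hab
        exact aux_zero_cross b hbC hbj (haj ▸ haC) hab.symm
      · exfalso
        rw [if_neg haj, if_pos hbj] at hab
        exact aux_zero_cross a haC haj (hbj ▸ hbC) hab
      · rw [if_neg haj, if_neg hbj] at hab
        exact D_inj hab
  -- π'-extended function
  set bf : Fin (N+1) → Fin (N+1) :=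
    fun j => if j = Fin.last N then Fin.last N else if j = t k then 0
             else if j ∈ C then D j else ph j with hbfdef
  have bf_last : bf (Fin.last N) = Fin.last N := by simp [bf]
  have hCmid : ∀ x, x ∈ C → x ≠ t k → ∃ m, 1 ≤ m ∧ m < k ∧ t m = x := by
    intro x hx hxk
    obtain ⟨m, hm1, hm2, rfl⟩ := (hmemC x).mp hx
    rcases eq_or_lt_of_le hm2 with rfl | hlt
    · exact absurd rfl hxk
    · exact ⟨m, hm1, hlt, rfl⟩
  have aux_bf_last : ∀ x, x ≠ Fin.last N → bf x ≠ Fin.last N := by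
    intro x hx hab
    simp only [bf, if_neg hx] at hab
    by_cases hxk : x = t k
    · rw [if_pos hxk] at hab
      exact hlast_ne hab.symm
    · rw [if_neg hxk] at hab
      by_cases hxC : x ∈ C
      · rw [if_pos hxC] at hab
        obtain ⟨m, hm1, hm2, rfl⟩ := hCmid x hxC hxk
        have h2 := hmin m hm1 hm2
        have h3 := D_eq_last _ hab
        rw [h3] at h2
        omega
      · rw [if_neg hxC] at hab
        have := ph_eq_last _ hab
        exact hxC (this ▸ (hmemC (t 1)).mpr ⟨1, le_refl _, hk0, rfl⟩)
  have aux_bf_zero : ∀ x, x ≠ Fin.last N → x ≠ t k → bf x ≠ 0 := by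
    intro x hx hxk hab
    simp only [bf, if_neg hx, if_neg hxk] at hab
    by_cases hxC : x ∈ C
    · rw [if_pos hxC] at hab
      obtain ⟨m, hm1, hm2, rfl⟩ := hCmid x hxC hxk
      have h2 := hmin m hm1 hm2
      have h3 := D_eq_zero _ hab
      omega
    · rw [if_neg hxC] at hab
      exact hx (ph_eq_zero _ hab)
  have aux_bf_cross : ∀ x y, x ∈ C → x ≠ t k → y ∉ C → D x ≠ ph y := by
    intro x y hxC hxk hyC hab
    obtain ⟨m, hm1, hm2, rfl⟩ := hCmid x hxC hxk
    rw [← hA m] at hab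
    have := ph_inj hab.symm
    exact hyC (this ▸ (hmemC (t (m+1))).mpr ⟨m+1, by omega, by omega, rfl⟩)
  have bf_inj : Function.Injective bf := by
    intro a b hab
    by_cases ha1 : a = Fin.last N <;> by_cases hb1 : b = Fin.last N
    · rw [ha1, hb1]
    · exfalso
      rw [ha1, bf_last] at hab
      exact aux_bf_last b hb1 hab.symm
    · exfalso
      rw [hb1, bf_last] at hab
      exact aux_bf_last a ha1 hab
    · by_cases ha2 : a = t k <;> by_cases hb2 : b = t k
      · rw [ha2, hb2]
      · exfalso
        have h1 : bf a = 0 := by simp only [bf, if_neg ha1, if_pos ha2]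
        rw [h1] at hab
        exact aux_bf_zero b hb1 hb2 hab.symm
      · exfalso
        have h1 : bf b = 0 := by simp only [bf, if_neg hb1, if_pos hb2]
        rw [h1] at hab
        exact aux_bf_zero a ha1 ha2 hab
      · simp only [bf, if_neg ha1, if_neg ha2, if_neg hb1, if_neg hb2] at hab
        by_cases haC : a ∈ C <;> by_cases hbC : b ∈ C
        · rw [if_pos haC, if_pos hbC] at hab
          exact D_inj hab
        · exfalso
          rw [if_pos haC, if_neg hbC] at hab
          exact aux_bf_cross a b haC ha2 hbC hab
        · exfalso
          rw [if_neg haC, if_pos hbC] at hab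
          exact aux_bf_cross b a hbC hb2 haC hab.symm
        · rw [if_neg haC, if_neg hbC] at hab
          exact ph_inj hab
  -- build the permutations
  set σ' : Equiv.Perm (Fin (N+1)) :=
    Equiv.ofBijective sf (Finite.injective_iff_bijective.mp sf_inj) with hσ'def
  have σ'_apply : ∀ j, σ' j = sf j := fun _ => rfl
  have bf_lt : ∀ j : Fin N, ((bf j.castSucc : Fin (N+1)) : ℕ) < N := by
    intro j
    have h1 : bf j.castSucc ≠ Fin.last N := by
      intro hc
      have h2 : j.castSucc = Fin.last N := bf_inj (by rw [hc, bf_last])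
      exact (Fin.castSucc_lt_last j).ne h2
    exact Fin.val_lt_last h1
  set π'f : Fin N → Fin N := fun j => ⟨(bf j.castSucc : ℕ), bf_lt j⟩ with hπ'fdef
  have π'f_inj : Function.Injective π'f := by
    intro a b h
    have h0 : ((π'f a : Fin N) : ℕ) = ((π'f b : Fin N) : ℕ) := congrArg Fin.val h
    have h1 : bf a.castSucc = bf b.castSucc := Fin.ext h0
    exact Fin.castSucc_injective _ (bf_inj h1)
  set π' : Equiv.Perm (Fin N) :=
    Equiv.ofBijective π'f (Finite.injective_iff_bijective.mp π'f_inj) with hπ'def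
  have π'_apply : ∀ j, (π' j : ℕ) = (bf j.castSucc : ℕ) := fun _ => rfl
  refine ⟨π', σ', ?_⟩
  -- cast lemmas
  have hDcast : ∀ x : Fin (N+1), 1 ≤ (σ x : ℕ) → ((D x : ℕ) : ℤ) = ((σ x : ℕ) : ℤ) - 1 := by
    intro x hx
    have := Dval x hx
    omega
  have hsrcF : ∀ j : Fin N, (((π j : ℕ) : ℤ) + 1) = ((ph j.castSucc : ℕ) : ℤ) := by
    intro j
    have hlt : ((j.castSucc : Fin (N+1)) : ℕ) < N := by simpa using j.isLt
    have h := ph_cast j.castSucc hlt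
    have h2 : (⟨((j.castSucc : Fin (N+1)) : ℕ), hlt⟩ : Fin N) = j := Fin.ext (by simp)
    rw [h, h2]
    push_cast
    ring
  have e2zero : (((0 : Fin (N+1)) : ℕ) : ℤ) = 0 := by simp
  have hrow : ∀ j : Fin (N+1), j ≠ Fin.last N →
      w j ((ph j : ℕ) : ℤ) + w j (((σ j : ℕ) : ℤ) - 1) ≤
      w j ((bf j : ℕ) : ℤ) + w j ((sf j : ℕ) : ℤ) + (if j = j₀ then ε else 0) := by
    intro j hjlast
    by_cases hjC : j ∈ C
    · by_cases hjk : j = t k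
      · have hbfj : bf j = 0 := by simp only [bf, if_neg hjlast, if_pos hjk]
        have hsfj : sf j = ph j := by simp only [sf, if_pos hjC]
        rw [hbfj, hsfj]
        by_cases hj0 : j = j₀
        · rw [if_pos hj0]
          have h0 : (σ j : ℕ) = 0 := by rw [hj0]; exact hj₀val
          have e1 : ((σ j : ℕ) : ℤ) - 1 = -1 := by omega
          rw [e1, e2zero]
          have := hw j
          linarith
        · rw [if_neg hj0]
          have h1 : 1 ≤ (σ j : ℕ) := hval_of_ne j hj0
          have h2 : (σ j : ℕ) = 1 := by
            have h3 := hσtk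
            rw [← hjk] at h3
            omega
          have e1 : ((σ j : ℕ) : ℤ) - 1 = 0 := by omega
          rw [e1, e2zero]
          linarith
      · obtain ⟨m, hm1, hm2, hm3⟩ := hCmid j hjC hjk
        have h2 : 2 ≤ (σ j : ℕ) := hm3 ▸ hmin m hm1 hm2
        have hj0 : j ≠ j₀ := hne_of_val j (by omega)
        have hbfj : bf j = D j := by simp only [bf, if_neg hjlast, if_neg hjk, if_pos hjC]
        have hsfj : sf j = ph j := by simp only [sf, if_pos hjC]
        rw [hbfj, hsfj, if_neg hj0, hDcast j (by omega)]
        linarith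
    · have hjk : j ≠ t k := fun hc => hjC (hc ▸ htkC)
      by_cases hj0 : j = j₀
      · have hbfj : bf j = ph j := by simp only [bf, if_neg hjlast, if_neg hjk, if_neg hjC]
        have hsfj : sf j = 0 := by simp only [sf, if_neg hjC, if_pos hj0]
        have h0 : (σ j : ℕ) = 0 := by rw [hj0]; exact hj₀val
        have e1 : ((σ j : ℕ) : ℤ) - 1 = -1 := by omega
        rw [hbfj, hsfj, if_pos hj0, e1, e2zero]
        have := hw j
        linarith
      · have hbfj : bf j = ph j := by simp only [bf, if_neg hjlast, if_neg hjk, if_neg hjC]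
        have hsfj : sf j = D j := by simp only [sf, if_neg hjC, if_neg hj0]
        rw [hbfj, hsfj, if_neg hj0, hDcast j (hval_of_ne j hj0)]
        linarith
  have hlastC : Fin.last N ∉ C := fun h => hCne_last _ h rfl
  have hlastrow : w (Fin.last N) (((σ (Fin.last N) : ℕ) : ℤ) - 1) ≤
      w (Fin.last N) ((sf (Fin.last N) : ℕ) : ℤ) + (if Fin.last N = j₀ then ε else 0) := by
    by_cases hj0 : Fin.last N = j₀
    · have hsfj : sf (Fin.last N) = 0 := by simp only [sf, if_neg hlastC, if_pos hj0]
      have h0 : (σ (Fin.last N) : ℕ) = 0 := by rw [hj0]; exact hj₀val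
      have e1 : ((σ (Fin.last N) : ℕ) : ℤ) - 1 = -1 := by omega
      rw [hsfj, if_pos hj0, e1, e2zero]
      exact hw _
    · have hsfj : sf (Fin.last N) = D (Fin.last N) := by
        simp only [sf, if_neg hlastC, if_neg hj0]
      rw [hsfj, if_neg hj0, hDcast _ (hval_of_ne _ hj0), add_zero]
  -- rewrite sums
  have e1 : (∑ j : Fin N, w j.castSucc (((π j : ℕ) : ℤ) + 1)) =
      ∑ j : Fin N, w j.castSucc ((ph j.castSucc : ℕ) : ℤ) :=
    Finset.sum_congr rfl fun j _ => by rw [hsrcF j]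
  have e2 : (∑ j, w j.castSucc ((π' j : ℕ) : ℤ)) =
      ∑ j : Fin N, w j.castSucc ((bf j.castSucc : ℕ) : ℤ) := rfl
  have e3 : (∑ j, w j ((σ' j : ℕ) : ℤ)) = ∑ j, w j ((sf j : ℕ) : ℤ) := rfl
  rw [e1, e2, e3,
    Fin.sum_univ_castSucc (f := fun j => w j (((σ j : ℕ) : ℤ) - 1)),
    Fin.sum_univ_castSucc (f := fun j => w j ((sf j : ℕ) : ℤ))]
  have hsum1 : (∑ j : Fin N, w j.castSucc ((ph j.castSucc : ℕ) : ℤ)) +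
      ∑ j : Fin N, w j.castSucc (((σ j.castSucc : ℕ) : ℤ) - 1) ≤
      ∑ j : Fin N, (w j.castSucc ((bf j.castSucc : ℕ) : ℤ) +
        w j.castSucc ((sf j.castSucc : ℕ) : ℤ) +
        (if (j.castSucc : Fin (N+1)) = j₀ then ε else 0)) := by
    rw [← Finset.sum_add_distrib]
    apply Finset.sum_le_sum
    intro j _
    exact hrow j.castSucc (Fin.castSucc_lt_last j).ne
  have hsplit : (∑ j : Fin N, (w j.castSucc ((bf j.castSucc : ℕ) : ℤ) +
        w j.castSucc ((sf j.castSucc : ℕ) : ℤ) +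
        (if (j.castSucc : Fin (N+1)) = j₀ then ε else 0))) =
      (∑ j : Fin N, w j.castSucc ((bf j.castSucc : ℕ) : ℤ)) +
      (∑ j : Fin N, w j.castSucc ((sf j.castSucc : ℕ) : ℤ)) +
      ∑ j : Fin N, (if (j.castSucc : Fin (N+1)) = j₀ then ε else 0) := by
    rw [Finset.sum_add_distrib, Finset.sum_add_distrib]
  have hsum2 : (∑ j : Fin N, (if (j.castSucc : Fin (N+1)) = j₀ then ε else 0)) +
      (if Fin.last N = j₀ then ε else 0) = ε := by
    rw [← Fin.sum_univ_castSucc (f := fun j : Fin (N+1) => if j = j₀ then ε else 0)]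
    simp
  linarith [hsum1, hlastrow, hsplit, hsum2]

theorem ukdv_backlund_small_p (N : ℕ) (hN : 1 ≤ N) (p c : Fin (N + 1) → ℝ)
    (hp0 : ∀ j, 0 ≤ p j) (hpmono : Monotone p)
    (q r : Fin (N + 1) → ℝ)
    (hq : ∀ j, q j = min (p j) 1) (hr : ∀ j, r j = 2 * p j)
    (f g : ℝ → ℝ → ℝ)
    (hf : ∀ n i : ℝ, f n i = uperm N fun j m =>
      |p j.castSucc * (n + 2 * ((m : ℕ) : ℝ)) - q j.castSucc * i + c j.castSucc|)
    (hg : ∀ n i : ℝ, g n i = uperm (N + 1) fun j m =>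
      |p j * (n + 2 * ((m : ℕ) : ℝ) - 2) - q j * i + c j|)
    (hplast : p (Fin.last N) ≤ 1) :
    ∀ n i : ℝ,
      f (n + 1) (i - 1) + g n i - p (Fin.last N) + q (Fin.last N) - 2 ≤
        f (n + 1) (i - 1) + g n i - p (Fin.last N) - q (Fin.last N) ∧
      f (n + 1) (i - 1) + g n i - p (Fin.last N) - q (Fin.last N) ≤
        f (n - 1) (i - 1) + g (n + 2) i - p (Fin.last N) + q (Fin.last N) := by
  intro n i
  have hqp : ∀ j, q j = p j := fun j => by
    rw [hq]; exact min_eq_left (le_trans (hpmono (Fin.le_last j)) hplast)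
  have hqlast : q (Fin.last N) = p (Fin.last N) := hqp _
  have hql1 : q (Fin.last N) ≤ 1 := by rw [hq]; exact min_le_right _ _
  constructor
  · linarith
  · set w : Fin (N+1) → ℤ → ℝ :=
      fun j s => |p j * n - p j * i + c j + 2 * p j * (s : ℝ)| with hwdef
    have hw : ∀ j, w j (-1) ≤ w j 0 + 2 * p (Fin.last N) := by
      intro j
      have hpj : 0 ≤ p j := hp0 j
      have hpl : p j ≤ p (Fin.last N) := hpmono (Fin.le_last j)
      simp only [w]
      have e1 : p j * n - p j * i + c j + 2 * p j * ((-1 : ℤ) : ℝ) =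
          (p j * n - p j * i + c j) - 2 * p j := by push_cast; ring
      have e2 : p j * n - p j * i + c j + 2 * p j * ((0 : ℤ) : ℝ) =
          p j * n - p j * i + c j := by push_cast; ring
      rw [e1, e2]
      have h1 : |(p j * n - p j * i + c j) - 2 * p j| ≤
          |p j * n - p j * i + c j| + |2 * p j| := by
        have h := abs_add_le (p j * n - p j * i + c j) (-(2 * p j))
        simpa [sub_eq_add_neg] using h
      have h2 : |2 * p j| = 2 * p j := abs_of_nonneg (by linarith)
      linarith
    have hf1 : f (n+1) (i-1) = uperm N (fun j m => w j.castSucc (((m : ℕ) : ℤ) + 1)) := by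
      rw [hf]
      congr 1
      funext j m
      rw [hqp]
      simp only [w]
      congr 1
      push_cast
      ring
    have hf2 : f (n-1) (i-1) = uperm N (fun j m => w j.castSucc ((m : ℕ) : ℤ)) := by
      rw [hf]
      congr 1
      funext j m
      rw [hqp]
      simp only [w]
      congr 1
      push_cast
      ring
    have hg1 : g n i = uperm (N+1) (fun j m => w j (((m : ℕ) : ℤ) - 1)) := by
      rw [hg]
      congr 1
      funext j m
      rw [hqp]
      simp only [w]
      congr 1
      push_cast
      ring
    have hg2 : g (n+2) i = uperm (N+1) (fun j m => w j ((m : ℕ) : ℤ)) := by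
      rw [hg]
      congr 1
      funext j m
      rw [hqp]
      simp only [w]
      congr 1
      push_cast
      ring
    obtain ⟨π, hπ⟩ := exists_uperm N (fun j m => w j.castSucc (((m : ℕ) : ℤ) + 1))
    obtain ⟨σ, hσ⟩ := exists_uperm (N+1) (fun j m => w j (((m : ℕ) : ℤ) - 1))
    obtain ⟨π', σ', hkey⟩ := key N hN w (2 * p (Fin.last N)) hw π σ
    have Hπ : f (n+1) (i-1) = ∑ j, w j.castSucc (((π j : ℕ) : ℤ) + 1) := hf1.trans hπ
    have Hσ : g n i = ∑ j, w j (((σ j : ℕ) : ℤ) - 1) := hg1.trans hσ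
    have Hb1 : (∑ j, w j.castSucc ((π' j : ℕ) : ℤ)) ≤ f (n-1) (i-1) := by
      rw [hf2]
      exact le_uperm N (fun j m => w j.castSucc ((m : ℕ) : ℤ)) π'
    have Hb2 : (∑ j, w j ((σ' j : ℕ) : ℤ)) ≤ g (n+2) i := by
      rw [hg2]
      exact le_uperm (N+1) (fun j m => w j ((m : ℕ) : ℤ)) σ'
    rw [hqlast]
    linarith [hkey, Hb1, Hb2]
end
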